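/- arXiv:2401.08412 — 7 statements merged into one kernel-verified Lean document; each statement's English description precedes it below -/
import Mathlib

section
/- For n ≥ 5 vertices and m = 3 clusters, the cycle clustering polytope CCP(n,3) has dimension (m-1)·n + |A| = 2n + n(n-1), i.e., its affine hull has dimension 2n + n(n-1) as a subset of ℝ^{3n + n(n-1)/2 + n(n-1)}. -/
open scoped BigOperators

noncomputable section

/-- Coordinate index set for the incidence vectors of cycle clusterings:
`x`-variables indexed by `(i,s)`, `y`-variables indexed by pairs `i < j`,
and `z`-variables indexed by arcs `i ≠ j`. -/
abbrev CCIdx (n m : ℕ) : Type :=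
  (Fin n × ZMod m) ⊕ {p : Fin n × Fin n // p.1 < p.2} ⊕ {p : Fin n × Fin n // p.1 ≠ p.2}

/-- Index of the variable `x_{i,s}`. -/
def xIdx {n m : ℕ} (i : Fin n) (s : ZMod m) : CCIdx n m := Sum.inl (i, s)

/-- Index of the variable `y_{i,j}` (with the convention `y_{i,j} = y_{j,i}`). -/
def yIdx {n m : ℕ} (i j : Fin n) (h : i ≠ j) : CCIdx n m :=
  if hij : i < j then Sum.inr (Sum.inl ⟨(i, j), hij⟩)
  else Sum.inr (Sum.inl ⟨(j, i), lt_of_le_of_ne (not_lt.mp hij) h.symm⟩)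

/-- Index of the variable `z_{i,j}`. -/
def zIdx {n m : ℕ} (i j : Fin n) (h : i ≠ j) : CCIdx n m := Sum.inr (Sum.inr ⟨(i, j), h⟩)

/-- Incidence vector of a clustering `κ : V → ZMod m`:
`x_{i,s} = 1` iff `κ i = s`, `y_{i,j} = 1` iff `κ i = κ j`,
`z_{i,j} = 1` iff `κ j = κ i + 1`. -/
def incVec {n m : ℕ} (κ : Fin n → ZMod m) : CCIdx n m → ℝ :=
  Sum.elim (fun p => if κ p.1 = p.2 then 1 else 0)
    (Sum.elim (fun p => if κ p.val.1 = κ p.val.2 then 1 else 0)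
      (fun p => if κ p.val.2 = κ p.val.1 + 1 then 1 else 0))

/-- The cycle clustering polytope `CCP(n,m)`: the convex hull of the incidence
vectors of all feasible clusterings, i.e. all surjective maps `κ : V → ZMod m`. -/
def CCP (n m : ℕ) : Set (CCIdx n m → ℝ) :=
  convexHull ℝ {v | ∃ κ : Fin n → ZMod m, Function.Surjective κ ∧ v = incVec κ}

/-- The `x_{i,s}`-coordinate of a point. -/
def Xc {n m : ℕ} (v : CCIdx n m → ℝ) (i : Fin n) (s : ZMod m) : ℝ := v (xIdx i s)

/-- The `y_{i,j}`-coordinate of a point (junk value `0` on the diagonal). -/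
def Yc {n m : ℕ} (v : CCIdx n m → ℝ) (i j : Fin n) : ℝ :=
  if h : i ≠ j then v (yIdx i j h) else 0

/-- The `z_{i,j}`-coordinate of a point (junk value `0` on the diagonal). -/
def Zc {n m : ℕ} (v : CCIdx n m → ℝ) (i j : Fin n) : ℝ :=
  if h : i ≠ j then v (zIdx i j h) else 0

/-- The dimension of (the affine hull of) `CCP(n,m)`. -/
def ccpDim (n m : ℕ) : ℕ :=
  Module.finrank ℝ (affineSpan ℝ (CCP n m)).direction

namespace CCPAux

lemma h3 : ∀ a : ZMod 3, a = 0 ∨ a = 1 ∨ a = 2 := by decide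

abbrev Idx (n : ℕ) : Type := (Fin n × Fin 2) ⊕ {p : Fin n × Fin n // p.1 ≠ p.2}

def sVal (t : Fin 2) : ZMod 3 := if t = 0 then 1 else 2

@[simp] lemma sVal_zero : sVal 0 = 1 := rfl
@[simp] lemma sVal_one : sVal 1 = 2 := rfl

def Bvec (n : ℕ) : Idx n → CCIdx n 3 → ℝ
  | Sum.inl kt => fun c =>
      (if c = xIdx kt.1 (sVal kt.2) then 1 else 0) - (if c = xIdx kt.1 0 then 1 else 0)
  | Sum.inr a => fun c =>
      (if c = zIdx a.1.1 a.1.2 a.2 then 1 else 0) - (if c = yIdx a.1.1 a.1.2 a.2 then 1 else 0)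

def Svec (n : ℕ) : Set (CCIdx n 3 → ℝ) :=
  {v | ∃ κ : Fin n → ZMod 3, Function.Surjective κ ∧ v = incVec κ}

def Hyp {n : ℕ} (v : CCIdx n 3 → ℝ) : Prop :=
  (∀ k : Fin n, v (xIdx k 0) + v (xIdx k 1) + v (xIdx k 2) = 0) ∧
  (∀ (k l : Fin n) (h : k ≠ l), v (yIdx k l h) + v (zIdx k l h) + v (zIdx l k h.symm) = 0)

@[simp] lemma incVec_x {n : ℕ} (κ : Fin n → ZMod 3) (k : Fin n) (s : ZMod 3) :
    incVec κ (xIdx k s) = if κ k = s then 1 else 0 := rfl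

@[simp] lemma incVec_z {n : ℕ} (κ : Fin n → ZMod 3) (k l : Fin n) (h : k ≠ l) :
    incVec κ (zIdx k l h) = if κ l = κ k + 1 then 1 else 0 := rfl

lemma incVec_y {n : ℕ} (κ : Fin n → ZMod 3) (k l : Fin n) (h : k ≠ l) :
    incVec κ (yIdx k l h) = if κ k = κ l then 1 else 0 := by
  by_cases h1 : k < l
  · rw [yIdx, dif_pos h1]; rfl
  · rw [yIdx, dif_neg h1]
    show (if κ l = κ k then (1:ℝ) else 0) = _
    simp [eq_comm]

lemma Hyp.sub {n : ℕ} {u w : CCIdx n 3 → ℝ} (hu : Hyp u) (hw : Hyp w) : Hyp (u - w) := by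
  refine ⟨fun k => ?_, fun k l h => ?_⟩ <;> simp only [Pi.sub_apply]
  · have := hu.1 k; have := hw.1 k; linarith
  · have := hu.2 k l h; have := hw.2 k l h; linarith

lemma hyp_incVec_sub {n : ℕ} (κ κ' : Fin n → ZMod 3) : Hyp (incVec κ - incVec κ') := by
  have key : ∀ μ : Fin n → ZMod 3,
      (∀ k : Fin n, incVec μ (xIdx k 0) + incVec μ (xIdx k 1) + incVec μ (xIdx k 2) = 1) ∧
      (∀ (k l : Fin n) (h : k ≠ l),
        incVec μ (yIdx k l h) + incVec μ (zIdx k l h) + incVec μ (zIdx l k h.symm) = 1) := by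
    intro μ
    constructor
    · intro k
      simp only [incVec_x]
      rcases h3 (μ k) with hk | hk | hk <;> rw [hk] <;> simp (config := { decide := true })
    · intro k l h
      rw [incVec_y, incVec_z, incVec_z]
      rcases h3 (μ k) with hk | hk | hk <;> rcases h3 (μ l) with hl | hl | hl <;>
        rw [hk, hl] <;> simp (config := { decide := true })
  refine ⟨fun k => ?_, fun k l h => ?_⟩ <;> simp only [Pi.sub_apply]
  · have := (key κ).1 k; have := (key κ').1 k; linarith
  · have := (key κ).2 k l h; have := (key κ').2 k l h; linarith


section IdxLemmas
variable {n : ℕ}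

@[simp] lemma inl_eq_yIdx (p : Fin n × ZMod 3) (i j : Fin n) (h : i ≠ j) :
    (Sum.inl p = yIdx i j h) ↔ False := by
  unfold yIdx; split_ifs <;> simp

@[simp] lemma inl_eq_zIdx (p : Fin n × ZMod 3) (i j : Fin n) (h : i ≠ j) :
    (Sum.inl p = zIdx i j h) ↔ False := by
  simp [zIdx]

@[simp] lemma inrinr_eq_yIdx (a : {p : Fin n × Fin n // p.1 ≠ p.2}) (i j : Fin n) (h : i ≠ j) :
    ((Sum.inr (Sum.inr a) : CCIdx n 3) = yIdx i j h) ↔ False := by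
  unfold yIdx; split_ifs <;> simp

@[simp] lemma inrinl_eq_zIdx (a : {p : Fin n × Fin n // p.1 < p.2}) (i j : Fin n) (h : i ≠ j) :
    ((Sum.inr (Sum.inl a) : CCIdx n 3) = zIdx i j h) ↔ False := by
  simp [zIdx]

@[simp] lemma inrinl_eq_xIdx (a : {p : Fin n × Fin n // p.1 < p.2}) (i : Fin n) (s : ZMod 3) :
    ((Sum.inr (Sum.inl a) : CCIdx n 3) = xIdx i s) ↔ False := by
  simp [xIdx]

@[simp] lemma inrinr_eq_xIdx (a : {p : Fin n × Fin n // p.1 ≠ p.2}) (i : Fin n) (s : ZMod 3) :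
    ((Sum.inr (Sum.inr a) : CCIdx n 3) = xIdx i s) ↔ False := by
  simp [xIdx]

@[simp] lemma inl_eq_xIdx (p : Fin n × ZMod 3) (i : Fin n) (s : ZMod 3) :
    (Sum.inl p = xIdx i s) ↔ p = (i, s) := by
  simp [xIdx]

@[simp] lemma inrinr_eq_zIdx (a : {p : Fin n × Fin n // p.1 ≠ p.2}) (i j : Fin n) (h : i ≠ j) :
    ((Sum.inr (Sum.inr a) : CCIdx n 3) = zIdx i j h) ↔ a = ⟨(i, j), h⟩ := by
  simp [zIdx]

lemma inrinl_eq_yIdx (k l : Fin n) (hkl : k < l) (i j : Fin n) (h : i ≠ j) :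
    ((Sum.inr (Sum.inl ⟨(k, l), hkl⟩) : CCIdx n 3) = yIdx i j h) ↔
      ((k = i ∧ l = j) ∨ (k = j ∧ l = i)) := by
  unfold yIdx
  split_ifs with hij
  · simp only [Sum.inr.injEq, Sum.inl.injEq, Subtype.mk.injEq, Prod.mk.injEq]
    constructor
    · exact fun hh => Or.inl hh
    · rintro (hh | ⟨rfl, rfl⟩)
      · exact hh
      · exact absurd hkl (asymm hij)
  · simp only [Sum.inr.injEq, Sum.inl.injEq, Subtype.mk.injEq, Prod.mk.injEq]
    constructor
    · exact fun hh => Or.inr hh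
    · rintro (⟨rfl, rfl⟩ | hh)
      · exact absurd hkl hij
      · exact hh
end IdxLemmas

def coef {n : ℕ} (v : CCIdx n 3 → ℝ) : Idx n → ℝ
  | Sum.inl kt => v (xIdx kt.1 (sVal kt.2))
  | Sum.inr a => v (zIdx a.1.1 a.1.2 a.2)

lemma repr_eq {n : ℕ} (v : CCIdx n 3 → ℝ) (hv : Hyp v) :
    v = ∑ b : Idx n, coef v b • Bvec n b := by
  funext c
  rw [Finset.sum_apply, Fintype.sum_sum_type]
  simp only [Pi.smul_apply]
  rcases c with ⟨k₀, s₀⟩ | ⟨a₀⟩ | ⟨a₀⟩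
  · -- x coordinate
    have h2 : ∑ a : {p : Fin n × Fin n // p.1 ≠ p.2},
        coef v (Sum.inr a) • Bvec n (Sum.inr a) (Sum.inl (k₀, s₀)) = 0 := by
      apply Finset.sum_eq_zero
      intro a _
      simp [Bvec]
    rw [h2, add_zero, Fintype.sum_prod_type]
    have h1 : ∀ k : Fin n, ∑ t : Fin 2,
        coef v (Sum.inl (k, t)) • Bvec n (Sum.inl (k, t)) (Sum.inl (k₀, s₀)) =
        if k = k₀ then
          v (xIdx k 1) * ((if s₀ = 1 then 1 else 0) - if s₀ = 0 then 1 else 0)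
          + v (xIdx k 2) * ((if s₀ = 2 then 1 else 0) - if s₀ = 0 then 1 else 0) else 0 := by
      intro k
      rw [Fin.sum_univ_two]
      simp only [Bvec, coef, sVal_zero, sVal_one, inl_eq_xIdx, Prod.mk.injEq]
      by_cases hk : k = k₀
      · subst hk
        simp [eq_comm, smul_eq_mul]
      · simp [Ne.symm hk, hk]
    rw [Finset.sum_congr rfl (fun k _ => h1 k), Finset.sum_ite_eq' Finset.univ k₀]
    simp only [Finset.mem_univ, if_pos]
    rcases h3 s₀ with rfl | rfl | rfl
    · have := hv.1 k₀
      simp only [xIdx] at this ⊢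
      simp (config := { decide := true })
      linarith
    · simp (config := { decide := true }) [xIdx]
    · simp (config := { decide := true }) [xIdx]
  · -- y coordinate
    obtain ⟨⟨k₀, l₀⟩, hlt⟩ := a₀
    have hne : k₀ ≠ l₀ := ne_of_lt hlt
    have h1 : ∑ kt : Fin n × Fin 2,
        coef v (Sum.inl kt) • Bvec n (Sum.inl kt) (Sum.inr (Sum.inl ⟨(k₀, l₀), hlt⟩)) = 0 := by
      apply Finset.sum_eq_zero
      intro kt _
      simp [Bvec]
    rw [h1, zero_add]
    have h2 : ∀ a : {p : Fin n × Fin n // p.1 ≠ p.2},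
        coef v (Sum.inr a) • Bvec n (Sum.inr a) (Sum.inr (Sum.inl ⟨(k₀, l₀), hlt⟩)) =
        (if a = ⟨(k₀, l₀), hne⟩ then -v (zIdx k₀ l₀ hne) else 0)
        + (if a = ⟨(l₀, k₀), hne.symm⟩ then -v (zIdx l₀ k₀ hne.symm) else 0) := by
      rintro ⟨⟨k, l⟩, hkl⟩
      simp only [Bvec, coef, smul_eq_mul, inrinl_eq_zIdx, if_false,
        inrinl_eq_yIdx k₀ l₀ hlt k l hkl, Subtype.mk.injEq, Prod.mk.injEq]
      by_cases e1 : k₀ = k ∧ l₀ = l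
      · obtain ⟨rfl, rfl⟩ := e1
        simp [hne, zIdx]
      · by_cases e2 : k₀ = l ∧ l₀ = k
        · obtain ⟨rfl, rfl⟩ := e2
          simp [hne, hne.symm, zIdx]
        · have hA : ¬((k₀ = k ∧ l₀ = l) ∨ (k₀ = l ∧ l₀ = k)) := by tauto
          have hB : ¬(k = k₀ ∧ l = l₀) := fun hh => e1 ⟨hh.1.symm, hh.2.symm⟩
          have hC : ¬(k = l₀ ∧ l = k₀) := fun hh => e2 ⟨hh.2.symm, hh.1.symm⟩
          simp [hA, hB, hC]
    rw [Finset.sum_congr rfl (fun a _ => h2 a), Finset.sum_add_distrib,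
      Finset.sum_ite_eq' Finset.univ, Finset.sum_ite_eq' Finset.univ]
    have hy : v (yIdx k₀ l₀ hne) + v (zIdx k₀ l₀ hne) + v (zIdx l₀ k₀ hne.symm) = 0 :=
      hv.2 k₀ l₀ hne
    have hyy : (yIdx k₀ l₀ hne : CCIdx n 3) = Sum.inr (Sum.inl ⟨(k₀, l₀), hlt⟩) := by
      rw [yIdx, dif_pos hlt]
    rw [hyy] at hy
    simp only [Finset.mem_univ, if_pos]
    linarith
  · -- z coordinate
    have h1 : ∑ kt : Fin n × Fin 2,
        coef v (Sum.inl kt) • Bvec n (Sum.inl kt) (Sum.inr (Sum.inr a₀)) = 0 := by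
      apply Finset.sum_eq_zero
      intro kt _
      simp [Bvec]
    rw [h1, zero_add]
    have h2 : ∀ a : {p : Fin n × Fin n // p.1 ≠ p.2},
        coef v (Sum.inr a) • Bvec n (Sum.inr a) (Sum.inr (Sum.inr a₀)) =
        if a₀ = a then coef v (Sum.inr a) else 0 := by
      intro a
      simp only [Bvec, smul_eq_mul, inrinr_eq_yIdx, if_false, inrinr_eq_zIdx]
      by_cases e : a₀ = a
      · subst e
        simp
      · have : ¬(a₀ = ⟨(a.1.1, a.1.2), a.2⟩) := by
          simpa using e
        simp [this, e]
    rw [Finset.sum_congr rfl (fun a _ => h2 a), Finset.sum_ite_eq Finset.univ]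
    simp only [Finset.mem_univ, if_pos]
    rfl

lemma sVal_ne_zero (t : Fin 2) : sVal t ≠ 0 := by fin_cases t <;> decide

lemma sVal_injective : Function.Injective sVal := by
  intro a b
  fin_cases a <;> fin_cases b <;> decide

lemma bvec_indep (n : ℕ) : LinearIndependent ℝ (Bvec n) := by
  rw [Fintype.linearIndependent_iff]
  intro g hg b
  rcases b with ⟨k, t⟩ | a
  · have h := congrFun hg (xIdx k (sVal t))
    rw [Finset.sum_apply] at h
    simp only [Pi.smul_apply, Pi.zero_apply] at h
    rw [Finset.sum_eq_single (Sum.inl (k, t) : Idx n)] at h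
    · have h2 : ¬((k, sVal t) = (k, (0 : ZMod 3))) := by
        intro hh
        exact sVal_ne_zero t (Prod.ext_iff.mp hh).2
      simpa [Bvec, xIdx, h2] using h
    · intro b' _ hb'
      rcases b' with ⟨k', t'⟩ | a'
      · have h1 : ¬((k, sVal t) = (k', sVal t')) := by
          intro hh
          obtain ⟨e1, e2⟩ := Prod.ext_iff.mp hh
          have e1' : k = k' := e1
          have e2' : sVal t = sVal t' := e2
          cases e1'
          cases sVal_injective e2'
          exact hb' rfl
        have h2 : ¬((k, sVal t) = (k', (0 : ZMod 3))) := by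
          intro hh
          exact sVal_ne_zero t (Prod.ext_iff.mp hh).2
        simp [Bvec, xIdx, h1, h2]
      · simp [Bvec, xIdx]
    · simp
  · have h := congrFun hg (zIdx a.1.1 a.1.2 a.2)
    rw [Finset.sum_apply] at h
    simp only [Pi.smul_apply, Pi.zero_apply] at h
    rw [Finset.sum_eq_single (Sum.inr a : Idx n)] at h
    · simpa [Bvec, zIdx] using h
    · intro b' _ hb'
      rcases b' with ⟨k', t'⟩ | a'
      · simp [Bvec, zIdx]
      · have h1 : ¬(a.1.1 = a'.1.1 ∧ a.1.2 = a'.1.2) := by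
          rintro ⟨e1, e2⟩
          exact hb' (by rw [Subtype.ext (Prod.ext e1 e2)])
        simp only [Bvec, zIdx, Sum.inr.injEq, Subtype.mk.injEq, Prod.mk.injEq, h1, if_false,
          smul_eq_mul]
        simp
    · simp


@[simp] lemma incVec_x' {n : ℕ} (κ : Fin n → ZMod 3) (k : Fin n) (s : ZMod 3) :
    incVec κ (Sum.inl (k, s)) = if κ k = s then 1 else 0 := rfl

@[simp] lemma incVec_pair {n : ℕ} (κ : Fin n → ZMod 3) (k l : Fin n) (hkl : k < l) :
    incVec κ (Sum.inr (Sum.inl ⟨(k, l), hkl⟩)) = if κ k = κ l then 1 else 0 := rfl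

@[simp] lemma incVec_arc {n : ℕ} (κ : Fin n → ZMod 3) (k l : Fin n) (hkl : k ≠ l) :
    incVec κ (Sum.inr (Sum.inr ⟨(k, l), hkl⟩)) = if κ l = κ k + 1 then 1 else 0 := rfl

lemma exists_three {n : ℕ} (hn : 5 ≤ n) (i j : Fin n) :
    ∃ p q r : Fin n, p ≠ q ∧ p ≠ r ∧ q ≠ r ∧ p ≠ i ∧ p ≠ j ∧ q ≠ i ∧ q ≠ j ∧ r ≠ i ∧ r ≠ j := by
  have hc : 3 ≤ ({i, j}ᶜ : Finset (Fin n)).card := by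
    have h1 : ({i, j} : Finset (Fin n)).card ≤ 2 :=
      (Finset.card_insert_le _ _).trans (by simp)
    have h2 : ({i, j}ᶜ : Finset (Fin n)).card = n - ({i, j} : Finset (Fin n)).card := by
      rw [Finset.card_compl, Fintype.card_fin]
    omega
  obtain ⟨t, hts, htc⟩ := Finset.exists_subset_card_eq hc
  obtain ⟨p, q, r, hpq, hpr, hqr, rfl⟩ := Finset.card_eq_three.mp htc
  have hp := hts (by simp : p ∈ ({p, q, r} : Finset (Fin n)))
  have hq := hts (by simp : q ∈ ({p, q, r} : Finset (Fin n)))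
  have hr := hts (by simp : r ∈ ({p, q, r} : Finset (Fin n)))
  simp only [Finset.mem_compl, Finset.mem_insert, Finset.mem_singleton, not_or] at hp hq hr
  exact ⟨p, q, r, hpq, hpr, hqr, hp.1, hp.2, hq.1, hq.2, hr.1, hr.2⟩

/-- background clustering -/
def bg {n : ℕ} (i j p q r : Fin n) (c d : ZMod 3) : Fin n → ZMod 3 := fun v =>
  if v = i then c else if v = j then d else
    if v = p then 0 else if v = q then 1 else if v = r then 2 else 0

lemma arc_mem {n : ℕ} (hn : 5 ≤ n) (i j : Fin n) (h : i ≠ j) :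
    Bvec n (Sum.inr ⟨(i, j), h⟩) ∈ vectorSpan ℝ (Svec n) := by
  obtain ⟨p, q, r, hpq, hpr, hqr, hpi, hpj, hqi, hqj, hri, hrj⟩ := exists_three hn i j
  have hsurj : ∀ c d, Function.Surjective (bg i j p q r c d) := by
    intro c d s
    rcases h3 s with rfl | rfl | rfl
    · exact ⟨p, by simp [bg, hpi, hpj]⟩
    · exact ⟨q, by simp [bg, hqi, hqj, hpq.symm]⟩
    · exact ⟨r, by simp [bg, hri, hrj, hpr.symm, hqr.symm]⟩
  have hmem : ∀ c d, incVec (bg i j p q r c d) ∈ Svec n :=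
    fun c d => ⟨bg i j p q r c d, hsurj c d, rfl⟩
  have hdiff : ∀ c, incVec (bg i j p q r c 1) - incVec (bg i j p q r c 0)
      ∈ vectorSpan ℝ (Svec n) :=
    fun c => vsub_mem_vectorSpan ℝ (hmem c 1) (hmem c 0)
  have key : Bvec n (Sum.inr ⟨(i, j), h⟩) =
      (3:ℝ)⁻¹ • ((2:ℝ) • (incVec (bg i j p q r 0 1) - incVec (bg i j p q r 0 0))
        - (incVec (bg i j p q r 2 1) - incVec (bg i j p q r 2 0))
        - (incVec (bg i j p q r 1 1) - incVec (bg i j p q r 1 0))) := by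
    funext c
    simp only [Pi.smul_apply, Pi.sub_apply, smul_eq_mul]
    rcases c with ⟨k, s⟩ | ⟨⟨⟨k, l⟩, hkl⟩⟩ | ⟨⟨⟨k, l⟩, hkl⟩⟩
    · -- x coordinates
      have hB : Bvec n (Sum.inr ⟨(i, j), h⟩) (Sum.inl (k, s)) = 0 := by
        simp [Bvec]
      rw [hB]
      simp only [incVec_x', bg]
      by_cases hk1 : k = i
      · simp (config := { decide := true }) [hk1]
        try ring
      · by_cases hk2 : k = j
        · simp (config := { decide := true }) [hk1, hk2, h, Ne.symm h]
          try ring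
        · simp (config := { decide := true }) [hk1, hk2]
          try ring
    · -- y coordinates
      have hB : Bvec n (Sum.inr ⟨(i, j), h⟩) (Sum.inr (Sum.inl ⟨(k, l), hkl⟩)) =
          0 - (if (k = i ∧ l = j) ∨ (k = j ∧ l = i) then 1 else 0) := by
        simp only [Bvec, inrinl_eq_zIdx, if_false, inrinl_eq_yIdx k l hkl i j h]
      rw [hB]
      have hkl' : k ≠ l := ne_of_lt hkl
      simp only [incVec_pair, bg]
      by_cases hki : k = i
      · by_cases hlj : l = j
        · have hli : l ≠ i := fun e => hkl' (hki.trans e.symm)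
          simp (config := { decide := true }) [hki, hlj, hli, h, Ne.symm h]
          try ring
          try norm_num
        · have hli : l ≠ i := fun e => hkl' (hki.trans e.symm)
          simp (config := { decide := true }) [hki, hlj, hli, h, Ne.symm h]
          try ring
      · by_cases hkj : k = j
        · by_cases hli : l = i
          · simp (config := { decide := true }) [hki, hkj, hli, h, Ne.symm h]
            try ring
            try norm_num
          · have hlj : l ≠ j := fun e => hkl' (hkj.trans e.symm)
            simp (config := { decide := true }) [hki, hkj, hli, hlj, h, Ne.symm h]
            try ring
        · by_cases hli : l = i
          · simp (config := { decide := true }) [hki, hkj, hli, h, Ne.symm h]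
            try ring
          · by_cases hlj : l = j
            · simp (config := { decide := true }) [hki, hkj, hli, hlj, h, Ne.symm h]
              try ring
            · simp (config := { decide := true }) [hki, hkj, hli, hlj]
              try ring
    · -- z coordinates
      have hB : Bvec n (Sum.inr ⟨(i, j), h⟩) (Sum.inr (Sum.inr ⟨(k, l), hkl⟩)) =
          (if k = i ∧ l = j then 1 else 0) - 0 := by
        simp only [Bvec, inrinr_eq_yIdx, if_false, zIdx, Sum.inr.injEq, Subtype.mk.injEq,
          Prod.mk.injEq]
        try norm_num
      rw [hB]
      simp only [incVec_arc, bg]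
      by_cases hki : k = i
      · by_cases hlj : l = j
        · have hli : l ≠ i := fun e => hkl (hki.trans e.symm)
          simp (config := { decide := true }) [hki, hlj, hli, h, Ne.symm h]
          try ring
          try norm_num
        · have hli : l ≠ i := fun e => hkl (hki.trans e.symm)
          simp (config := { decide := true }) [hki, hlj, hli, h, Ne.symm h]
          try ring
      · by_cases hkj : k = j
        · by_cases hli : l = i
          · simp (config := { decide := true }) [hki, hkj, hli, h, Ne.symm h]
            try ring
            try norm_num
          · have hlj : l ≠ j := fun e => hkl (hkj.trans e.symm)
            simp (config := { decide := true }) [hki, hkj, hli, hlj, h, Ne.symm h]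
            try ring
        · by_cases hli : l = i
          · simp (config := { decide := true }) [hki, hkj, hli, h, Ne.symm h]
            try ring
          · by_cases hlj : l = j
            · simp (config := { decide := true }) [hki, hkj, hli, hlj, h, Ne.symm h]
              try ring
            · simp (config := { decide := true }) [hki, hkj, hli, hlj]
              try ring
  rw [key]
  exact Submodule.smul_mem _ _ (Submodule.sub_mem _ (Submodule.sub_mem _
    (Submodule.smul_mem _ _ (hdiff 0)) (hdiff 2)) (hdiff 1))


@[simp] lemma yIdx_eq_inl {n : ℕ} (i j : Fin n) (h : i ≠ j) (p : Fin n × ZMod 3) :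
    (yIdx i j h = Sum.inl p) ↔ False := by
  unfold yIdx; split_ifs <;> simp

@[simp] lemma zIdx_eq_inl {n : ℕ} (i j : Fin n) (h : i ≠ j) (p : Fin n × ZMod 3) :
    ((zIdx i j h : CCIdx n 3) = Sum.inl p) ↔ False := by
  simp [zIdx]

lemma hyp_Bx {n : ℕ} (k : Fin n) (t : Fin 2) : Hyp (Bvec n (Sum.inl (k, t))) := by
  constructor
  · intro k'
    by_cases hk : k' = k
    · subst hk
      fin_cases t <;>
        simp (config := { decide := true }) [Bvec, xIdx]
    · have h1 : ∀ s s' : ZMod 3, ¬((k', s) = (k, s')) := fun s s' e => hk (Prod.ext_iff.mp e).1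
      simp [Bvec, xIdx, h1]
  · intro k' l' h'
    simp [Bvec, xIdx]

lemma x_mem {n : ℕ} (hn : 5 ≤ n) (k : Fin n) (t : Fin 2) :
    Bvec n (Sum.inl (k, t)) ∈ vectorSpan ℝ (Svec n) := by
  obtain ⟨p, q, r, hpq, hpr, hqr, hpk, _, hqk, _, hrk, _⟩ := exists_three hn k k
  have hsurj : ∀ c, Function.Surjective (bg k k p q r c c) := by
    intro c s
    rcases h3 s with rfl | rfl | rfl
    · exact ⟨p, by simp [bg, hpk]⟩
    · exact ⟨q, by simp [bg, hqk, hpq.symm]⟩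
    · exact ⟨r, by simp [bg, hrk, hpr.symm, hqr.symm]⟩
  have hmem : ∀ c, incVec (bg k k p q r c c) ∈ Svec n :=
    fun c => ⟨bg k k p q r c c, hsurj c, rfl⟩
  have hH : incVec (bg k k p q r (sVal t) (sVal t)) - incVec (bg k k p q r 0 0)
      ∈ vectorSpan ℝ (Svec n) := vsub_mem_vectorSpan ℝ (hmem (sVal t)) (hmem 0)
  set H := incVec (bg k k p q r (sVal t) (sVal t)) - incVec (bg k k p q r 0 0) with hHdef
  set R := H - Bvec n (Sum.inl (k, t)) with hRdef
  have hypR : Hyp R := Hyp.sub (hyp_incVec_sub _ _) (hyp_Bx k t)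
  have hx0 : ∀ (k' : Fin n) (t' : Fin 2), R (xIdx k' (sVal t')) = 0 := by
    intro k' t'
    rw [hRdef, hHdef]
    simp only [Pi.sub_apply, incVec_x, Bvec, bg, xIdx]
    by_cases hk : k' = k
    · subst hk
      fin_cases t <;> fin_cases t' <;>
        simp (config := { decide := true }) [bg]
    · have h1 : ∀ s s' : ZMod 3, ¬((Sum.inl (k', s) : CCIdx n 3) = Sum.inl (k, s')) := by
        intro s s' e
        exact hk (Prod.ext_iff.mp (Sum.inl.injEq _ _ ▸ e : (k', s) = (k, s'))).1
      simp [bg, hk, h1 (sVal t') (sVal t), h1 (sVal t') 0]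
  have hRmem : R ∈ vectorSpan ℝ (Svec n) := by
    rw [repr_eq R hypR]
    apply Submodule.sum_mem
    rintro (⟨k', t'⟩ | a) _
    · show (coef R (Sum.inl (k', t'))) • Bvec n (Sum.inl (k', t')) ∈ _
      rw [show coef R (Sum.inl (k', t')) = R (xIdx k' (sVal t')) from rfl, hx0 k' t', zero_smul]
      exact Submodule.zero_mem _
    · exact Submodule.smul_mem _ _ (arc_mem hn a.1.1 a.1.2 a.2)
  have : Bvec n (Sum.inl (k, t)) = H - R := by
    rw [hRdef]; ring
  rw [this]
  exact Submodule.sub_mem _ hH hRmem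

lemma span_eq (n : ℕ) (hn : 5 ≤ n) :
    vectorSpan ℝ (Svec n) = Submodule.span ℝ (Set.range (Bvec n)) := by
  apply le_antisymm
  · rw [vectorSpan_def]
    apply Submodule.span_le.mpr
    rintro x hx
    rw [Set.mem_vsub] at hx
    obtain ⟨u, hu, w, hw, rfl⟩ := hx
    obtain ⟨κ, _, rfl⟩ := hu
    obtain ⟨κ', _, rfl⟩ := hw
    have hyp := hyp_incVec_sub κ κ'
    show incVec κ - incVec κ' ∈ _
    rw [repr_eq _ hyp]
    exact Submodule.sum_mem _ fun b _ =>
      Submodule.smul_mem _ _ (Submodule.subset_span ⟨b, rfl⟩)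
  · apply Submodule.span_le.mpr
    rintro x ⟨b, rfl⟩
    rcases b with ⟨k, t⟩ | a
    · exact x_mem hn k t
    · exact arc_mem hn a.1.1 a.1.2 a.2

lemma card_arcs (n : ℕ) : Fintype.card {p : Fin n × Fin n // p.1 ≠ p.2} = n * n - n := by
  have h1 : Fintype.card {p : Fin n × Fin n // p.1 = p.2} = n := by
    have e : {p : Fin n × Fin n // p.1 = p.2} ≃ Fin n := by
      refine ⟨fun a => a.1.1, fun x => ⟨(x, x), rfl⟩, ?_, ?_⟩
      · rintro ⟨⟨x, y⟩, hxy⟩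
        obtain rfl : x = y := hxy
        rfl
      · intro x
        rfl
    rw [Fintype.card_congr e, Fintype.card_fin]
  have h2 := Fintype.card_subtype_compl (fun p : Fin n × Fin n => p.1 = p.2)
  rw [h1] at h2
  simpa using h2

lemma card_idx (n : ℕ) (hn : 5 ≤ n) : Fintype.card (Idx n) = 2 * n + n * (n - 1) := by
  obtain ⟨m, rfl⟩ : ∃ m, n = m + 1 := ⟨n - 1, by omega⟩
  have e1 : (m + 1) * (m + 1) - (m + 1) = (m + 1) * m := by
    rw [Nat.mul_succ, Nat.add_sub_cancel]
  simp only [Idx, Fintype.card_sum, Fintype.card_prod, Fintype.card_fin, card_arcs, e1]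
  simp only [Nat.add_sub_cancel]
  ring

end CCPAux

/-- For `n ≥ 5` vertices and `m = 3` clusters, the cycle clustering polytope
`CCP(n,3)` has dimension `(m-1)·n + |A| = 2n + n(n-1)`. -/
theorem ccp_dim_three_clusters (n : ℕ) (hn : 5 ≤ n) :
    ccpDim n 3 = 2 * n + n * (n - 1) := by
  have h1 : CCP n 3 = convexHull ℝ (CCPAux.Svec n) := rfl
  show Module.finrank ℝ (affineSpan ℝ (CCP n 3)).direction = 2 * n + n * (n - 1)
  rw [h1, affineSpan_convexHull, direction_affineSpan, CCPAux.span_eq n hn,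
    finrank_span_eq_card (CCPAux.bvec_indep n), CCPAux.card_idx n hn]

end
end

section
/- For 4 ≤ m ≤ n-2, the cycle clustering polytope CCP(n,m) has dimension (m-1)·n + 1.5·|A| = (m-1)n + (3/2)·n(n-1), which equals the full number of y- and z-coordinates plus (m-1)n. -/
open scoped BigOperators

noncomputable section

namespace CCPAux

lemma dual_apply {ι : Type*} [Fintype ι] [DecidableEq ι]
    (f : Module.Dual ℝ (ι → ℝ)) (v : ι → ℝ) :
    f v = ∑ j, v j * f (Pi.single j 1) := by
  conv_lhs => rw [pi_eq_sum_univ v]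
  rw [map_sum]
  refine Finset.sum_congr rfl fun j _ => ?_
  rw [map_smul, smul_eq_mul]
  congr 2
  funext j'
  simp [Pi.single_apply, eq_comm]

def sumX (n m : ℕ) [NeZero m] : (CCIdx n m → ℝ) →ₗ[ℝ] (Fin n → ℝ) :=
  LinearMap.pi fun i => ∑ s : ZMod m, LinearMap.proj (xIdx i s)

lemma sumX_apply {n m : ℕ} [NeZero m] (v : CCIdx n m → ℝ) (i : Fin n) :
    sumX n m v i = ∑ s : ZMod m, v (xIdx i s) := by
  simp [sumX]

lemma sumX_surjective (n m : ℕ) [NeZero m] : Function.Surjective (sumX n m) := by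
  intro g
  refine ⟨Sum.elim (fun q => if q.2 = 0 then g q.1 else 0) (fun _ => 0), ?_⟩
  funext i
  rw [sumX_apply]
  simp only [xIdx, Sum.elim_inl]
  rw [Finset.sum_ite_eq' Finset.univ (0 : ZMod m) (fun _ => g i)]
  simp

lemma card_lt (n : ℕ) : Fintype.card {p : Fin n × Fin n // p.1 < p.2} = n * (n - 1) / 2 := by
  classical
  rw [Fintype.card_subtype]
  set c := (Finset.univ.filter fun p : Fin n × Fin n => p.1 < p.2).card with hc
  set c' := (Finset.univ.filter fun p : Fin n × Fin n => p.2 < p.1).card with hc'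
  have hcc : c = c' := by
    rw [hc, hc']
    refine Finset.card_bij' (fun p _ => p.swap) (fun p _ => p.swap) ?_ ?_ ?_ ?_ <;>
      simp [Prod.swap]
  have hsum : c + c' = n * n - n := by
    have hne : (Finset.univ.filter fun p : Fin n × Fin n => p.1 ≠ p.2)
        = (Finset.univ.filter fun p : Fin n × Fin n => p.1 < p.2)
          ∪ (Finset.univ.filter fun p : Fin n × Fin n => p.2 < p.1) := by
      ext p
      simp only [Finset.mem_filter, Finset.mem_union, Finset.mem_univ, true_and]
      constructor
      · exact fun h => h.lt_or_gt
      · rintro (h | h) <;> [exact h.ne; exact h.ne']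
    have hdisj : Disjoint (Finset.univ.filter fun p : Fin n × Fin n => p.1 < p.2)
        (Finset.univ.filter fun p : Fin n × Fin n => p.2 < p.1) := by
      rw [Finset.disjoint_filter]
      intro p _ h1
      exact fun h2 => absurd h2 h1.asymm.elim
    have h1 : (Finset.univ.filter fun p : Fin n × Fin n => p.1 ≠ p.2).card = n * n - n := by
      have : (Finset.univ.filter fun p : Fin n × Fin n => p.1 ≠ p.2)
          = (Finset.univ : Finset (Fin n)).offDiag := by
        ext p; simp [Finset.mem_offDiag]
      rw [this, Finset.offDiag_card]
      simp
    rw [hne, Finset.card_union_of_disjoint hdisj] at h1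
    exact h1
  have hnn : n * n - n = n * (n - 1) := by
    cases n with
    | zero => simp
    | succ k => rw [Nat.succ_sub_one, Nat.mul_succ, Nat.add_sub_cancel]
  rw [hnn] at hsum
  omega

lemma card_ne (n : ℕ) : Fintype.card {p : Fin n × Fin n // p.1 ≠ p.2} = n * (n - 1) := by
  classical
  rw [Fintype.card_subtype]
  have : (Finset.univ.filter fun p : Fin n × Fin n => p.1 ≠ p.2)
      = (Finset.univ : Finset (Fin n)).offDiag := by
    ext p; simp [Finset.mem_offDiag]
  rw [this, Finset.offDiag_card]
  have hnn : n * n - n = n * (n - 1) := by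
    cases n with
    | zero => simp
    | succ k => rw [Nat.succ_sub_one, Nat.mul_succ, Nat.add_sub_cancel]
  simp [hnn]

lemma upd2_apply {n m : ℕ} (β : Fin n → ZMod m) (p k : Fin n) (a b : ZMod m) (i : Fin n) :
    Function.update (Function.update β p a) k b i
      = if i = k then b else if i = p then a else β i := by
  simp [Function.update_apply]

set_option maxHeartbeats 1000000 in
lemma rect_eq {n m : ℕ} (p k : Fin n) (hpk : p < k) (β : Fin n → ZMod m)
    (s u s' u' : ZMod m) :
    incVec (Function.update (Function.update β p s) k u)
      + incVec (Function.update (Function.update β p s') k u')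
      - incVec (Function.update (Function.update β p s) k u')
      - incVec (Function.update (Function.update β p s') k u)
    = ((if s = u then (1:ℝ) else 0) + (if s' = u' then 1 else 0)
        - (if s = u' then 1 else 0) - (if s' = u then 1 else 0)) • (Pi.single (yIdx p k hpk.ne) 1 : CCIdx n m → ℝ)
    + ((if u = s + 1 then (1:ℝ) else 0) + (if u' = s' + 1 then 1 else 0)
        - (if u' = s + 1 then 1 else 0) - (if u = s' + 1 then 1 else 0)) • (Pi.single (zIdx p k hpk.ne) 1 : CCIdx n m → ℝ)
    + ((if s = u + 1 then (1:ℝ) else 0) + (if s' = u' + 1 then 1 else 0)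
        - (if s = u' + 1 then 1 else 0) - (if s' = u + 1 then 1 else 0)) • (Pi.single (zIdx k p hpk.ne') 1 : CCIdx n m → ℝ) := by
  have hypk : (yIdx p k hpk.ne : CCIdx n m) = Sum.inr (Sum.inl ⟨(p, k), hpk⟩) := by
    simp [yIdx, hpk]
  funext j
  simp only [Pi.add_apply, Pi.sub_apply, Pi.smul_apply, smul_eq_mul, hypk, zIdx]
  rcases j with ⟨i, r⟩ | ⟨⟨i, j2⟩, hij⟩ | ⟨⟨i, j2⟩, hij⟩
  · -- x coordinate
    simp only [incVec, Sum.elim_inl, Pi.single_apply, reduceCtorEq, if_false, mul_zero,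
      upd2_apply]
    rcases eq_or_ne i k with rfl | hik
    · simp only [if_pos rfl, if_true]; ring
    · rcases eq_or_ne i p with rfl | hip
      · simp only [if_neg hik, if_pos rfl, if_true]; ring
      · simp only [if_neg hik, if_neg hip]; ring
  · -- y coordinate
    simp only [incVec, Sum.elim_inr, Sum.elim_inl, upd2_apply, Pi.single_apply,
      reduceCtorEq, if_false, mul_zero, Sum.inr.injEq, Sum.inl.injEq, Subtype.mk.injEq,
      Prod.mk.injEq]
    rcases eq_or_ne i p with rfl | hip
    · rcases eq_or_ne j2 k with rfl | hjk
      · simp [hpk.ne, hpk.ne']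
      · have hj2p : j2 ≠ i := hij.ne'
        simp [hpk.ne, hjk, hj2p]
    · rcases eq_or_ne j2 k with rfl | hjk
      · have hik : i ≠ j2 := hij.ne
        simp [hik, hip]
      · rcases eq_or_ne j2 p with rfl | hj2p
        · have hik : i ≠ k := (hij.trans hpk).ne
          simp [hik, hip, hpk.ne]
        · rcases eq_or_ne i k with rfl | hik
          · simp [hjk, hj2p, hip]
          · simp [hik, hip, hjk, hj2p]
  · -- z coordinate
    simp only [incVec, Sum.elim_inr, upd2_apply, Pi.single_apply,
      reduceCtorEq, if_false, mul_zero, Sum.inr.injEq, Sum.inl.injEq, Subtype.mk.injEq,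
      Prod.mk.injEq]
    rcases eq_or_ne i p with rfl | hip
    · rcases eq_or_ne j2 k with rfl | hjk
      · simp [hpk.ne, hpk.ne']
      · have hj2p : j2 ≠ i := hij.symm
        simp [hpk.ne, hjk, hj2p]
    · rcases eq_or_ne i k with rfl | hik
      · rcases eq_or_ne j2 p with rfl | hj2p
        · simp [hpk.ne, hpk.ne']
        · have hj2k : j2 ≠ i := hij.symm
          simp [hpk.ne', hj2p, hj2k]
      · rcases eq_or_ne j2 p with rfl | hj2p
        · simp [hip, hik, hpk.ne]
        · rcases eq_or_ne j2 k with rfl | hjk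
          · simp [hip, hik, hpk.ne']
          · simp [hip, hik, hj2p, hjk]


lemma zmod_cast_ne {m : ℕ} [NeZero m] {a b : ℕ} (ha : a < m) (hb : b < m) (h : a ≠ b) :
    (a : ZMod m) ≠ (b : ZMod m) := fun H =>
  h (by rw [← ZMod.val_cast_of_lt ha, ← ZMod.val_cast_of_lt hb, H])

lemma exists_background {n m : ℕ} [NeZero m] (hmn : m + 2 ≤ n) (p k : Fin n) :
    ∃ β : Fin n → ZMod m, ∀ r : ZMod m, ∃ q : Fin n, q ≠ p ∧ q ≠ k ∧ β q = r := by
  classical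
  have hcard : Fintype.card (ZMod m) ≤ Fintype.card {q : Fin n // q ≠ p ∧ q ≠ k} := by
    rw [ZMod.card, Fintype.card_subtype]
    have : (Finset.univ.filter fun q : Fin n => q ≠ p ∧ q ≠ k) = ({p, k} : Finset (Fin n))ᶜ := by
      ext q; simp [not_or]
    rw [this, Finset.card_compl]
    have : ({p, k} : Finset (Fin n)).card ≤ 2 := Finset.card_insert_le _ _ |>.trans (by simp)
    simp only [Fintype.card_fin]
    omega
  obtain ⟨e⟩ := Function.Embedding.nonempty_of_card_le hcard
  set g : ZMod m → Fin n := fun r => (e r : Fin n) with hg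
  have hginj : Function.Injective g := fun r r' h => e.injective (Subtype.ext h)
  refine ⟨Function.invFun g, fun r => ⟨g r, (e r).2.1, (e r).2.2, Function.leftInverse_invFun hginj r⟩⟩

lemma exists_background1 {n m : ℕ} [NeZero m] (hmn : m + 1 ≤ n) (p : Fin n) :
    ∃ β : Fin n → ZMod m, ∀ r : ZMod m, ∃ q : Fin n, q ≠ p ∧ β q = r := by
  classical
  have hcard : Fintype.card (ZMod m) ≤ Fintype.card {q : Fin n // q ≠ p} := by
    rw [ZMod.card, Fintype.card_subtype]
    have : (Finset.univ.filter fun q : Fin n => q ≠ p) = ({p} : Finset (Fin n))ᶜ := by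
      ext q; simp
    rw [this, Finset.card_compl]
    simp only [Fintype.card_fin, Finset.card_singleton]
    omega
  obtain ⟨e⟩ := Function.Embedding.nonempty_of_card_le hcard
  set g : ZMod m → Fin n := fun r => (e r : Fin n) with hg
  have hginj : Function.Injective g := fun r r' h => e.injective (Subtype.ext h)
  refine ⟨Function.invFun g, fun r => ⟨g r, (e r).2, Function.leftInverse_invFun hginj r⟩⟩

lemma pair_coeffs {n m : ℕ} [NeZero m] (hm : 4 ≤ m) (hmn : m + 2 ≤ n)
    (f : Module.Dual ℝ (CCIdx n m → ℝ))
    (hf : ∀ κ κ' : Fin n → ZMod m, Function.Surjective κ → Function.Surjective κ' →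
      f (incVec κ) = f (incVec κ'))
    (p k : Fin n) (hlt : p < k) :
    f (Pi.single (yIdx p k hlt.ne) 1) = 0 ∧ f (Pi.single (zIdx p k hlt.ne) 1) = 0 ∧
      f (Pi.single (zIdx k p hlt.ne') 1) = 0 := by
  classical
  obtain ⟨β, hβ⟩ := exists_background hmn p k
  have hsurj : ∀ a b : ZMod m, Function.Surjective (Function.update (Function.update β p a) k b) := by
    intro a b r
    obtain ⟨q, hqp, hqk, hq⟩ := hβ r
    exact ⟨q, by rw [Function.update_of_ne hqk, Function.update_of_ne hqp, hq]⟩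
  set B := f (Pi.single (yIdx p k hlt.ne) 1) with hB
  set C1 := f (Pi.single (zIdx p k hlt.ne) 1) with hC1
  set C2 := f (Pi.single (zIdx k p hlt.ne') 1) with hC2
  have key : ∀ s u s' u' : ZMod m,
      ((if s = u then (1:ℝ) else 0) + (if s' = u' then 1 else 0)
        - (if s = u' then 1 else 0) - (if s' = u then 1 else 0)) * B
      + ((if u = s + 1 then (1:ℝ) else 0) + (if u' = s' + 1 then 1 else 0)
        - (if u' = s + 1 then 1 else 0) - (if u = s' + 1 then 1 else 0)) * C1
      + ((if s = u + 1 then (1:ℝ) else 0) + (if s' = u' + 1 then 1 else 0)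
        - (if s = u' + 1 then 1 else 0) - (if s' = u + 1 then 1 else 0)) * C2 = 0 := by
    intro s u s' u'
    have h4 := congrArg f (rect_eq p k hlt β s u s' u')
    rw [map_sub, map_sub, map_add, map_add, map_add, map_smul, map_smul, map_smul] at h4
    rw [hf _ _ (hsurj s' u') (hsurj s u), hf _ _ (hsurj s u') (hsurj s u),
      hf _ _ (hsurj s' u) (hsurj s u)] at h4
    simp only [smul_eq_mul] at h4
    linarith [h4]
  have h01 : ((0:ℕ) : ZMod m) ≠ ((1:ℕ) : ZMod m) := zmod_cast_ne (by omega) (by omega) (by omega)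
  have h02 : ((0:ℕ) : ZMod m) ≠ ((2:ℕ) : ZMod m) := zmod_cast_ne (by omega) (by omega) (by omega)
  have h03 : ((0:ℕ) : ZMod m) ≠ ((3:ℕ) : ZMod m) := zmod_cast_ne (by omega) (by omega) (by omega)
  have h12 : ((1:ℕ) : ZMod m) ≠ ((2:ℕ) : ZMod m) := zmod_cast_ne (by omega) (by omega) (by omega)
  have h13 : ((1:ℕ) : ZMod m) ≠ ((3:ℕ) : ZMod m) := zmod_cast_ne (by omega) (by omega) (by omega)
  have h23 : ((2:ℕ) : ZMod m) ≠ ((3:ℕ) : ZMod m) := zmod_cast_ne (by omega) (by omega) (by omega)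
  have e01 : ((0:ZMod m)) ≠ 1 := by exact_mod_cast h01
  have e02 : ((0:ZMod m)) ≠ 2 := by exact_mod_cast h02
  have e03 : ((0:ZMod m)) ≠ 3 := by exact_mod_cast h03
  have e12 : ((1:ZMod m)) ≠ 2 := by exact_mod_cast h12
  have e13 : ((1:ZMod m)) ≠ 3 := by exact_mod_cast h13
  have Eq1 := key 0 0 1 1
  have Eq2 := key 0 0 1 2
  have Eq3 := key 0 0 2 1
  simp only [zero_add, one_add_one_eq_two, two_add_one_eq_three] at Eq1 Eq2 Eq3
  simp only [if_pos rfl, if_neg e01, if_neg e02, if_neg e03, if_neg e12, if_neg e13,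
    if_neg e01.symm, if_neg e02.symm, if_neg e03.symm, if_neg e12.symm, if_neg e13.symm, if_true] at Eq1 Eq2 Eq3
  refine ⟨by linarith, by linarith, by linarith⟩


lemma x_coeffs {n m : ℕ} [NeZero m] (hmn : m + 2 ≤ n)
    (f : Module.Dual ℝ (CCIdx n m → ℝ))
    (hf : ∀ κ κ' : Fin n → ZMod m, Function.Surjective κ → Function.Surjective κ' →
      f (incVec κ) = f (incVec κ'))
    (hz : ∀ j : {p : Fin n × Fin n // p.1 < p.2} ⊕ {p : Fin n × Fin n // p.1 ≠ p.2},
      f (Pi.single (Sum.inr j : CCIdx n m) 1) = 0)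
    (p : Fin n) (s t : ZMod m) :
    f (Pi.single (xIdx p s) 1) = f (Pi.single (xIdx p t) 1) := by
  classical
  obtain ⟨β, hβ⟩ := exists_background1 (m := m) (by omega) p
  set κ1 := Function.update β p s with hκ1
  set κ2 := Function.update β p t with hκ2
  have hs1 : Function.Surjective κ1 := by
    intro r; obtain ⟨q, hqp, hq⟩ := hβ r
    exact ⟨q, by rw [hκ1, Function.update_of_ne hqp, hq]⟩
  have hs2 : Function.Surjective κ2 := by
    intro r; obtain ⟨q, hqp, hq⟩ := hβ r
    exact ⟨q, by rw [hκ2, Function.update_of_ne hqp, hq]⟩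
  set g : CCIdx n m → ℝ := fun j => (incVec κ1 - incVec κ2) j * f (Pi.single j 1) with hg
  have h0 : (0:ℝ) = ∑ j : CCIdx n m, g j := by
    rw [hg, ← dual_apply, map_sub, hf κ1 κ2 hs1 hs2, sub_self]
  rw [Fintype.sum_sum_type] at h0
  have h2 : ∑ b : {p : Fin n × Fin n // p.1 < p.2} ⊕ {p : Fin n × Fin n // p.1 ≠ p.2},
      g (Sum.inr b) = 0 :=
    Finset.sum_eq_zero fun b _ => by
      simp only [hg]; rw [hz b, mul_zero]
  rw [h2, add_zero, Fintype.sum_prod_type] at h0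
  have hoff : ∀ i ∈ Finset.univ, i ≠ p → ∑ r : ZMod m, g (Sum.inl (i, r)) = 0 := by
    intro i _ hi
    refine Finset.sum_eq_zero fun r _ => ?_
    simp only [hg, Pi.sub_apply, incVec, Sum.elim_inl, hκ1, hκ2, Function.update_of_ne hi]
    simp
  rw [Finset.sum_eq_single p hoff (fun h => absurd (Finset.mem_univ p) h)] at h0
  have h3 : ∑ r : ZMod m, g (Sum.inl (p, r))
      = f (Pi.single (xIdx p s) 1) - f (Pi.single (xIdx p t) 1) := by
    simp only [hg, Pi.sub_apply, incVec, Sum.elim_inl, hκ1, hκ2, Function.update_self,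
      sub_mul, ite_mul, one_mul, zero_mul]
    rw [Finset.sum_sub_distrib, Finset.sum_ite_eq, Finset.sum_ite_eq]
    simp [xIdx]
  rw [h3] at h0
  linarith [h0]


theorem main (n m : ℕ) (hm : 4 ≤ m) (hmn : m + 2 ≤ n) :
    ccpDim n m = (m - 1) * n + n * (n - 1) / 2 + n * (n - 1) := by
  classical
  haveI : NeZero m := ⟨by omega⟩
  set K : Set (CCIdx n m → ℝ) :=
    {v | ∃ κ : Fin n → ZMod m, Function.Surjective κ ∧ v = incVec κ} with hK
  have hdim : ccpDim n m = Module.finrank ℝ (vectorSpan ℝ K) := by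
    rw [ccpDim, CCP, ← hK, affineSpan_convexHull, direction_affineSpan]
  have hsum1 : ∀ (κ : Fin n → ZMod m) (i : Fin n),
      ∑ s : ZMod m, incVec κ (xIdx i s) = 1 := by
    intro κ i
    simp only [incVec, xIdx, Sum.elim_inl]
    rw [Finset.sum_ite_eq]
    simp
  have hWsub : vectorSpan ℝ K ≤ LinearMap.ker (sumX n m) := by
    rw [vectorSpan_def, Submodule.span_le]
    rintro v hv
    obtain ⟨v1, hv1, v2, hv2, rfl⟩ := hv
    obtain ⟨κ1, hs1, rfl⟩ := hv1
    obtain ⟨κ2, hs2, rfl⟩ := hv2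
    rw [SetLike.mem_coe, LinearMap.mem_ker]
    funext i
    simp only [vsub_eq_sub, map_sub, Pi.sub_apply, sumX_apply, Pi.zero_apply]
    rw [Finset.sum_sub_distrib, hsum1 κ1 i, hsum1 κ2 i, sub_self]
  have hsup : LinearMap.ker (sumX n m) ≤ vectorSpan ℝ K := by
    intro w hw
    refine (Subspace.forall_mem_dualAnnihilator_apply_eq_zero_iff (vectorSpan ℝ K) w).mp ?_
    intro φ hφ
    rw [Submodule.mem_dualAnnihilator] at hφ
    have hf : ∀ κ κ' : Fin n → ZMod m, Function.Surjective κ → Function.Surjective κ' →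
        φ (incVec κ) = φ (incVec κ') := by
      intro κ κ' h1 h2
      have hmem1 : incVec κ ∈ K := ⟨κ, h1, rfl⟩
      have hmem2 : incVec κ' ∈ K := ⟨κ', h2, rfl⟩
      have := hφ _ (vsub_mem_vectorSpan ℝ hmem1 hmem2)
      rw [vsub_eq_sub, map_sub] at this
      linarith
    have hz : ∀ j : {p : Fin n × Fin n // p.1 < p.2} ⊕ {p : Fin n × Fin n // p.1 ≠ p.2},
        φ (Pi.single (Sum.inr j : CCIdx n m) 1) = 0 := by
      rintro (⟨⟨i, j2⟩, hij⟩ | ⟨⟨i, j2⟩, hij⟩)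
      · have h := (pair_coeffs hm hmn φ hf i j2 hij).1
        have he : (yIdx i j2 hij.ne : CCIdx n m) = Sum.inr (Sum.inl ⟨(i, j2), hij⟩) := by
          simp [yIdx, hij]
        rwa [he] at h
      · rcases lt_or_gt_of_ne hij with hlt | hgt
        · exact (pair_coeffs hm hmn φ hf i j2 hlt).2.1
        · exact (pair_coeffs hm hmn φ hf j2 i hgt).2.2
    rw [dual_apply φ w, Fintype.sum_sum_type]
    have hz' : ∑ b : {p : Fin n × Fin n // p.1 < p.2} ⊕ {p : Fin n × Fin n // p.1 ≠ p.2},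
        w (Sum.inr b) * φ (Pi.single (Sum.inr b) 1) = 0 :=
      Finset.sum_eq_zero fun b _ => by rw [hz b, mul_zero]
    rw [hz', add_zero, Fintype.sum_prod_type]
    refine Finset.sum_eq_zero fun i _ => ?_
    have ha : ∀ r : ZMod m, φ (Pi.single (Sum.inl (i, r) : CCIdx n m) 1)
        = φ (Pi.single (Sum.inl (i, (0 : ZMod m)) : CCIdx n m) 1) := fun r =>
      x_coeffs hmn φ hf hz i r 0
    calc ∑ r : ZMod m, w (Sum.inl (i, r)) * φ (Pi.single (Sum.inl (i, r)) 1)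
        = ∑ r : ZMod m, w (Sum.inl (i, r))
            * φ (Pi.single (Sum.inl (i, (0 : ZMod m)) : CCIdx n m) 1) :=
          Finset.sum_congr rfl fun r _ => by rw [ha r]
      _ = (∑ r : ZMod m, w (Sum.inl (i, r)))
            * φ (Pi.single (Sum.inl (i, (0 : ZMod m)) : CCIdx n m) 1) := by
          rw [Finset.sum_mul]
      _ = 0 := by
          have hki := congrFun (LinearMap.mem_ker.mp hw) i
          rw [sumX_apply] at hki
          have : ∑ r : ZMod m, w (Sum.inl (i, r)) = 0 := hki
          rw [this, zero_mul]
  have heq : vectorSpan ℝ K = LinearMap.ker (sumX n m) := le_antisymm hWsub hsup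
  rw [hdim, heq]
  have hrn := LinearMap.finrank_range_add_finrank_ker (sumX n m)
  rw [LinearMap.range_eq_top.mpr (sumX_surjective n m), finrank_top] at hrn
  have hV : Module.finrank ℝ (CCIdx n m → ℝ) = n * m + n * (n - 1) / 2 + n * (n - 1) := by
    rw [Module.finrank_pi]
    rw [Fintype.card_sum, Fintype.card_sum, Fintype.card_prod, Fintype.card_fin, ZMod.card,
      card_lt, card_ne]
    omega
  have hFn : Module.finrank ℝ (Fin n → ℝ) = n := by
    rw [Module.finrank_pi, Fintype.card_fin]
  rw [hV, hFn] at hrn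
  have hnm : n * m = n * (m - 1) + n := by
    cases m with
    | zero => omega
    | succ k => simp [Nat.succ_sub_one, Nat.mul_succ]
  have hcomm : (m - 1) * n = n * (m - 1) := Nat.mul_comm _ _
  rw [hcomm]
  omega

end CCPAux

/-- For `4 ≤ m ≤ n-2`, the cycle clustering polytope `CCP(n,m)` has dimension
`(m-1)·n + 1.5·|A|`, i.e. the full number of `y`- and `z`-coordinates
(`n(n-1)/2` and `n(n-1)`, respectively) plus `(m-1)·n`. -/
theorem ccp_dim_general (n m : ℕ) (hm : 4 ≤ m) (hmn : m + 2 ≤ n) :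
    ccpDim n m = (m - 1) * n + n * (n - 1) / 2 + n * (n - 1) := by
  exact CCPAux.main n m hm hmn

end
end

section
/- For 4 ≤ m ≤ n-2, none of the upper-bound inequalities x_{i,s} ≤ 1 (for i ∈ V, s ∈ ZMod m), y_{i,j} ≤ 1 (for i < j), and z_{i,j} ≤ 1 (for (i,j) ∈ A) defines a facet of the cycle clustering polytope CCP(n,m), i.e., the face of CCP(n,m) on which the respective coordinate equals 1 has dimension strictly less than dim(CCP(n,m)) - 1. -/
open scoped BigOperators

noncomputable section

lemma zmod_ne {m : ℕ} (a b : ℕ) (ha : a < m) (hb : b < m) (hab : a ≠ b) :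
    (a : ZMod m) ≠ (b : ZMod m) := by
  haveI : NeZero m := ⟨by omega⟩
  intro h; apply hab
  have := congrArg ZMod.val h
  rwa [ZMod.val_natCast_of_lt ha, ZMod.val_natCast_of_lt hb] at this

lemma exists_kappa {n m : ℕ} (hm : m ≠ 0) (hmn : m + 2 ≤ n) {i j : Fin n}
    (hij : i ≠ j) (a b : ZMod m) :
    ∃ κ : Fin n → ZMod m, Function.Surjective κ ∧ κ i = a ∧ κ j = b := by
  haveI : NeZero m := ⟨hm⟩
  set T : Finset (Fin n) := Finset.univ \ {i, j} with hT
  have hcardT : m ≤ T.card := by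
    have : ({i, j} : Finset (Fin n)).card = 2 := by
      rw [Finset.card_insert_of_notMem (by simpa using hij), Finset.card_singleton]
    rw [Finset.card_sdiff_of_subset (Finset.subset_univ _), this, Finset.card_univ, Fintype.card_fin]
    omega
  have hcard : Fintype.card (ZMod m) ≤ Fintype.card T := by
    rw [ZMod.card, Fintype.card_coe]; exact hcardT
  obtain ⟨e⟩ := Function.Embedding.nonempty_of_card_le hcard
  set f : ZMod m → Fin n := fun s => (e s : Fin n) with hf
  have hfinj : Function.Injective f := fun s t h => e.injective (Subtype.ext h)
  have hfi : ∀ s, f s ≠ i ∧ f s ≠ j := by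
    intro s
    have h2 : (e s : Fin n) ∈ Finset.univ \ ({i, j} : Finset (Fin n)) := (e s).2
    rw [Finset.mem_sdiff, Finset.mem_insert, Finset.mem_singleton] at h2
    exact ⟨fun h => h2.2 (Or.inl h), fun h => h2.2 (Or.inr h)⟩
  refine ⟨fun v => if v = i then a else if v = j then b else Function.invFun f v, ?_, ?_, ?_⟩
  · intro s
    exact ⟨f s, by simp [(hfi s).1, (hfi s).2, Function.leftInverse_invFun hfinj s]⟩
  · simp
  · simp [hij.symm]

@[simp] lemma incVec_xIdx {n m : ℕ} (κ : Fin n → ZMod m) (i : Fin n) (s : ZMod m) :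
    incVec κ (xIdx i s) = if κ i = s then 1 else 0 := rfl
@[simp] lemma incVec_zIdx {n m : ℕ} (κ : Fin n → ZMod m) {i j : Fin n} (h : i ≠ j) :
    incVec κ (zIdx i j h) = if κ j = κ i + 1 then 1 else 0 := rfl
lemma incVec_yIdx {n m : ℕ} (κ : Fin n → ZMod m) {i j : Fin n} (h : i ≠ j) :
    incVec κ (yIdx i j h) = if κ i = κ j then 1 else 0 := by
  by_cases hlt : i < j
  · unfold yIdx; rw [dif_pos hlt]; rfl
  · unfold yIdx; rw [dif_neg hlt]
    show (if κ j = κ i then (1:ℝ) else 0) = _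
    by_cases hc : κ i = κ j
    · rw [if_pos hc.symm, if_pos hc]
    · rw [if_neg (fun h' => hc h'.symm), if_neg hc]

lemma incVec_nonneg {n m : ℕ} (κ : Fin n → ZMod m) (c : CCIdx n m) : 0 ≤ incVec κ c := by
  rcases c with p | p | p <;> · dsimp [incVec]; split <;> norm_num

lemma CCP_face_zero {n m : ℕ} (c c' : CCIdx n m)
    (hvert : ∀ κ : Fin n → ZMod m, incVec κ c + incVec κ c' ≤ 1) :
    ∀ v ∈ CCP n m, v c = 1 → v c' = 0 := by
  have hlinA : IsLinearMap ℝ (fun v : CCIdx n m → ℝ => v c + v c') :=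
    ⟨fun u w => by simp only [Pi.add_apply]; ring, fun r u => by simp only [Pi.smul_apply, smul_eq_mul]; ring⟩
  have hlinB : IsLinearMap ℝ (fun v : CCIdx n m → ℝ => v c') :=
    ⟨fun u w => by simp, fun r u => by simp⟩
  have hA : CCP n m ⊆ {v | v c + v c' ≤ 1} := by
    refine convexHull_min ?_ (convex_halfSpace_le hlinA 1)
    rintro v ⟨κ, hκ, rfl⟩; exact hvert κ
  have hB : CCP n m ⊆ {v | 0 ≤ v c'} := by
    refine convexHull_min ?_ (convex_halfSpace_ge hlinB 0)
    rintro v ⟨κ, hκ, rfl⟩; exact incVec_nonneg κ c'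
  intro v hv h1
  have := hA hv; have := hB hv
  simp only [Set.mem_setOf_eq] at *
  linarith

lemma mem_CCP {n m : ℕ} {κ : Fin n → ZMod m} (h : Function.Surjective κ) :
    incVec κ ∈ CCP n m :=
  subset_convexHull ℝ _ ⟨κ, h, rfl⟩


section KeyLemma
open Module Submodule
lemma key_lemma {E : Type*} [AddCommGroup E] [Module ℝ E] [FiniteDimensional ℝ E]
    {S F : Set E} (hFS : F ⊆ S)
    (ℓ1 ℓ2 : E →ₗ[ℝ] ℝ)
    (hF1 : ∀ v ∈ F, ℓ1 v = 0) (hF2 : ∀ v ∈ F, ℓ2 v = 0)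
    {p0 p1 p2 : E} (h0 : p0 ∈ S) (h1 : p1 ∈ S) (h2 : p2 ∈ S)
    (e11 : ℓ1 (p1 - p0) = 1) (e21 : ℓ2 (p1 - p0) = 0)
    (e12 : ℓ1 (p2 - p0) = 0) (e22 : ℓ2 (p2 - p0) = 1) :
    finrank ℝ (affineSpan ℝ F).direction < finrank ℝ (affineSpan ℝ S).direction - 1 := by
  set U := (affineSpan ℝ S).direction with hU
  set W := U ⊓ (LinearMap.ker ℓ1 ⊓ LinearMap.ker ℓ2) with hW
  have hd1U : p1 - p0 ∈ U := by
    simpa [vsub_eq_sub] using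
      AffineSubspace.vsub_mem_direction (mem_affineSpan ℝ h1) (mem_affineSpan ℝ h0)
  have hd2U : p2 - p0 ∈ U := by
    simpa [vsub_eq_sub] using
      AffineSubspace.vsub_mem_direction (mem_affineSpan ℝ h2) (mem_affineSpan ℝ h0)
  have hFdir : (affineSpan ℝ F).direction ≤ W := by
    refine le_inf (AffineSubspace.direction_le (affineSpan_mono ℝ hFS)) (le_inf ?_ ?_) <;>
    · rw [direction_affineSpan, vectorSpan_def]
      refine Submodule.span_le.mpr ?_
      rintro x hx
      rw [Set.mem_vsub] at hx
      obtain ⟨a, ha, b, hb, rfl⟩ := hx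
      simp [LinearMap.mem_ker, vsub_eq_sub, hF1 a ha, hF1 b hb, hF2 a ha, hF2 b hb]
  set W1 := W ⊔ Submodule.span ℝ {p1 - p0} with hW1
  set W2 := W1 ⊔ Submodule.span ℝ {p2 - p0} with hW2
  have hlt1 : W < W1 := by
    refine lt_of_le_of_ne le_sup_left (fun hEq => ?_)
    have hmem : p1 - p0 ∈ W := by
      rw [hEq]; exact Submodule.mem_sup_right (Submodule.subset_span rfl)
    have : ℓ1 (p1 - p0) = 0 := hmem.2.1
    rw [e11] at this; norm_num at this
  have hlt2 : W1 < W2 := by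
    refine lt_of_le_of_ne le_sup_left (fun hEq => ?_)
    have hmem : p2 - p0 ∈ W1 := by
      rw [hEq]; exact Submodule.mem_sup_right (Submodule.subset_span rfl)
    rw [hW1, Submodule.mem_sup] at hmem
    obtain ⟨w, hw, x, hx, hsum⟩ := hmem
    rw [Submodule.mem_span_singleton] at hx
    obtain ⟨a, rfl⟩ := hx
    have : ℓ2 (p2 - p0) = 0 := by
      rw [← hsum]
      simp [map_add, map_smul, e21, LinearMap.mem_ker.mp hw.2.2]
    rw [e22] at this; norm_num at this
  have hle : W2 ≤ U := by
    refine sup_le (sup_le inf_le_left ?_) ?_ <;>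
      · rw [Submodule.span_le, Set.singleton_subset_iff]; assumption
  have f1 : finrank ℝ W < finrank ℝ W1 := Submodule.finrank_lt_finrank_of_lt hlt1
  have f2 : finrank ℝ W1 < finrank ℝ W2 := Submodule.finrank_lt_finrank_of_lt hlt2
  have f3 : finrank ℝ W2 ≤ finrank ℝ U := Submodule.finrank_mono hle
  have f0 : finrank ℝ (affineSpan ℝ F).direction ≤ finrank ℝ W := Submodule.finrank_mono hFdir
  omega
end KeyLemma

/-- For `4 ≤ m ≤ n-2`, none of the upper-bound inequalities `x_{i,s} ≤ 1`,
`y_{i,j} ≤ 1` (for `i < j`) and `z_{i,j} ≤ 1` (for `i ≠ j`) defines a facet of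
`CCP(n,m)`: the face where the corresponding coordinate equals `1` has
dimension strictly less than `dim CCP(n,m) - 1`. -/
theorem upper_bounds_not_facets (n m : ℕ) (hm : 4 ≤ m) (hmn : m + 2 ≤ n) :
    (∀ (i : Fin n) (s : ZMod m),
      Module.finrank ℝ (affineSpan ℝ {v ∈ CCP n m | v (xIdx i s) = 1}).direction
        < ccpDim n m - 1) ∧
    (∀ (i j : Fin n) (hij : i < j),
      Module.finrank ℝ (affineSpan ℝ {v ∈ CCP n m | v (yIdx i j hij.ne) = 1}).direction
        < ccpDim n m - 1) ∧
    (∀ (i j : Fin n) (hij : i ≠ j),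
      Module.finrank ℝ (affineSpan ℝ {v ∈ CCP n m | v (zIdx i j hij) = 1}).direction
        < ccpDim n m - 1) := by
  haveI : NeZero m := ⟨by omega⟩
  have hm0 : m ≠ 0 := by omega
  have h10 : (1 : ZMod m) ≠ 0 := by
    have := zmod_ne (m := m) 1 0 (by omega) (by omega) (by omega); simpa using this
  have h20 : (2 : ZMod m) ≠ 0 := by
    have := zmod_ne (m := m) 2 0 (by omega) (by omega) (by omega); simpa using this
  have h30 : (3 : ZMod m) ≠ 0 := by
    have := zmod_ne (m := m) 3 0 (by omega) (by omega) (by omega); simpa using this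
  have n21 : (2 : ZMod m) ≠ 1 := fun h => h10 (by linear_combination h)
  have n02 : (0 : ZMod m) ≠ 2 := fun h => h20 (by linear_combination -h)
  have n03 : (0 : ZMod m) ≠ 3 := fun h => h30 (by linear_combination -h)
  have nm11 : (-1 : ZMod m) ≠ 1 := fun h => h20 (by linear_combination -h)
  have n01 : (0 : ZMod m) ≠ 1 := fun h => h10 (by linear_combination -h)
  have n0m1 : (0 : ZMod m) ≠ -1 := fun h => h10 (by linear_combination h)
  refine ⟨?_, ?_, ?_⟩
  · -- x case
    intro i s
    have ha : s ≠ s + 1 := fun h => h10 (by linear_combination -h)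
    have hb : s ≠ s + 2 := fun h => h20 (by linear_combination -h)
    have hcne : s + 1 ≠ s + 2 := fun h => h10 (by linear_combination -h)
    have hdne : s + 2 ≠ s + 1 := fun h => h10 (by linear_combination h)
    obtain ⟨j, hj⟩ : ∃ j : Fin n, j ≠ i :=
      Fintype.exists_ne_of_one_lt_card (by rw [Fintype.card_fin]; omega) i
    obtain ⟨κ0, hs0, hi0, -⟩ := exists_kappa hm0 hmn hj.symm s 0
    obtain ⟨κ1, hs1, hi1, -⟩ := exists_kappa hm0 hmn hj.symm (s + 1) 0
    obtain ⟨κ2, hs2, hi2, -⟩ := exists_kappa hm0 hmn hj.symm (s + 2) 0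
    have hv1 : ∀ κ : Fin n → ZMod m,
        incVec κ (xIdx i s) + incVec κ (xIdx i (s + 1)) ≤ 1 := by
      intro κ; rw [incVec_xIdx, incVec_xIdx]
      split_ifs with h1 h2
      · exact absurd (h1.symm.trans h2) ha
      all_goals norm_num
    have hv2 : ∀ κ : Fin n → ZMod m,
        incVec κ (xIdx i s) + incVec κ (xIdx i (s + 2)) ≤ 1 := by
      intro κ; rw [incVec_xIdx, incVec_xIdx]
      split_ifs with h1 h2
      · exact absurd (h1.symm.trans h2) hb
      all_goals norm_num
    unfold ccpDim
    refine key_lemma (F := {v ∈ CCP n m | v (xIdx i s) = 1}) (S := CCP n m)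
      (fun v hv => hv.1)
      (LinearMap.proj (xIdx i (s + 1))) (LinearMap.proj (xIdx i (s + 2)))
      (fun v hv => CCP_face_zero _ _ hv1 v hv.1 hv.2)
      (fun v hv => CCP_face_zero _ _ hv2 v hv.1 hv.2)
      (mem_CCP hs0) (mem_CCP hs1) (mem_CCP hs2) ?_ ?_ ?_ ?_ <;>
    · simp [LinearMap.proj_apply, Pi.sub_apply, incVec_xIdx, hi0, hi1, hi2,
        ha, hb, hcne, hdne]
  · -- y case
    intro i j hij
    have hv1 : ∀ κ : Fin n → ZMod m,
        incVec κ (yIdx i j hij.ne) + incVec κ (zIdx i j hij.ne) ≤ 1 := by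
      intro κ; rw [incVec_yIdx, incVec_zIdx]
      split_ifs with h1 h2
      · exact absurd (show (1 : ZMod m) = 0 by linear_combination -h1 - h2) h10
      all_goals norm_num
    have hv2 : ∀ κ : Fin n → ZMod m,
        incVec κ (yIdx i j hij.ne) + incVec κ (zIdx j i hij.ne.symm) ≤ 1 := by
      intro κ; rw [incVec_yIdx, incVec_zIdx]
      split_ifs with h1 h2
      · exact absurd (show (1 : ZMod m) = 0 by linear_combination h1 - h2) h10
      all_goals norm_num
    obtain ⟨κ0, hs0, hi0, hj0⟩ := exists_kappa hm0 hmn hij.ne 0 2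
    obtain ⟨κ1, hs1, hi1, hj1⟩ := exists_kappa hm0 hmn hij.ne 0 1
    obtain ⟨κ2, hs2, hi2, hj2⟩ := exists_kappa hm0 hmn hij.ne 0 (-1)
    unfold ccpDim
    refine key_lemma (F := {v ∈ CCP n m | v (yIdx i j hij.ne) = 1}) (S := CCP n m)
      (fun v hv => hv.1)
      (LinearMap.proj (zIdx i j hij.ne)) (LinearMap.proj (zIdx j i hij.ne.symm))
      (fun v hv => CCP_face_zero _ _ hv1 v hv.1 hv.2)
      (fun v hv => CCP_face_zero _ _ hv2 v hv.1 hv.2)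
      (mem_CCP hs0) (mem_CCP hs1) (mem_CCP hs2) ?_ ?_ ?_ ?_ <;>
    · simp [LinearMap.proj_apply, Pi.sub_apply, incVec_zIdx, hi0, hj0, hi1, hj1,
        hi2, hj2, n21, n02, n03, nm11, n01, n0m1, one_add_one_eq_two, two_add_one_eq_three, neg_add_cancel]
  · -- z case
    intro i j hij
    have hv1 : ∀ κ : Fin n → ZMod m,
        incVec κ (zIdx i j hij) + incVec κ (yIdx i j hij) ≤ 1 := by
      intro κ; rw [incVec_yIdx, incVec_zIdx]
      split_ifs with h1 h2
      · exact absurd (show (1 : ZMod m) = 0 by linear_combination -h1 - h2) h10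
      all_goals norm_num
    have hv2 : ∀ κ : Fin n → ZMod m,
        incVec κ (zIdx i j hij) + incVec κ (zIdx j i hij.symm) ≤ 1 := by
      intro κ; rw [incVec_zIdx, incVec_zIdx]
      split_ifs with h1 h2
      · exact absurd (show (2 : ZMod m) = 0 by linear_combination -h1 - h2) h20
      all_goals norm_num
    obtain ⟨κ0, hs0, hi0, hj0⟩ := exists_kappa hm0 hmn hij 0 2
    obtain ⟨κ1, hs1, hi1, hj1⟩ := exists_kappa hm0 hmn hij 0 0
    obtain ⟨κ2, hs2, hi2, hj2⟩ := exists_kappa hm0 hmn hij 0 (-1)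
    unfold ccpDim
    refine key_lemma (F := {v ∈ CCP n m | v (zIdx i j hij) = 1}) (S := CCP n m)
      (fun v hv => hv.1)
      (LinearMap.proj (yIdx i j hij)) (LinearMap.proj (zIdx j i hij.symm))
      (fun v hv => CCP_face_zero _ _ hv1 v hv.1 hv.2)
      (fun v hv => CCP_face_zero _ _ hv2 v hv.1 hv.2)
      (mem_CCP hs0) (mem_CCP hs1) (mem_CCP hs2) ?_ ?_ ?_ ?_ <;>
    · simp [LinearMap.proj_apply, Pi.sub_apply, incVec_zIdx, incVec_yIdx,
        hi0, hj0, hi1, hj1, hi2, hj2, n21, n02, n03, nm11, n01, n0m1, one_add_one_eq_two, two_add_one_eq_three, neg_add_cancel]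

end
end

section
/- Let m ≥ 4. For any three pairwise distinct vertices i, j, k ∈ V, the inequality y_{i,j} + y_{j,k} - y_{i,k} + (1/2)·(z_{i,j} + z_{j,i} + z_{j,k} + z_{k,j} - z_{i,k} - z_{k,i}) ≤ 1 is valid for the cycle clustering polytope CCP(n,m). -/
open scoped BigOperators

noncomputable section

/-- Key arithmetic fact: the triangle-with-half-z inequality holds for indicator
values of any three cluster labels `a b c` in `ZMod m` when `m ≥ 4`. -/
lemma triangle_half_z_key (m : ℕ) (hm : 4 ≤ m) (a b c : ZMod m) :
    (if a = b then (1:ℝ) else 0) + (if b = c then (1:ℝ) else 0)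
      - (if a = c then (1:ℝ) else 0)
    + (1 / 2 : ℝ) * ((if b = a + 1 then (1:ℝ) else 0) + (if a = b + 1 then (1:ℝ) else 0)
        + (if c = b + 1 then (1:ℝ) else 0) + (if b = c + 1 then (1:ℝ) else 0)
        - (if c = a + 1 then (1:ℝ) else 0) - (if a = c + 1 then (1:ℝ) else 0)) ≤ 1 := by
  have hcast : ∀ t : ℕ, 0 < t → t < m → (t : ZMod m) ≠ 0 := by
    intro t ht htm h
    rw [ZMod.natCast_eq_zero_iff] at h
    exact absurd (Nat.le_of_dvd ht h) (by omega)
  have h1 : (1 : ZMod m) ≠ 0 := by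
    have := hcast 1 (by omega) (by omega); simpa using this
  have h2 : (2 : ZMod m) ≠ 0 := by
    have := hcast 2 (by omega) (by omega); simpa using this
  have f1 : ∀ x : ZMod m, x ≠ x + 1 := fun x h => h1 (by linear_combination -h)
  by_cases hab : a = b
  · subst hab
    rw [if_pos rfl, if_neg (f1 a)]
    split_ifs <;> norm_num
  by_cases hbc : b = c
  · subst hbc
    rw [if_neg hab, if_pos rfl, if_neg (f1 b)]
    split_ifs <;> norm_num
  by_cases hac : a = c
  · subst hac
    rw [if_neg hab, if_neg (fun h : b = a => hab h.symm), if_pos rfl, if_neg (f1 a)]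
    split_ifs <;> norm_num
  · rw [if_neg hab, if_neg hbc, if_neg hac]
    have pair : ∀ (P Q : Prop) [Decidable P] [Decidable Q], (P → Q → False) →
        (if P then (1:ℝ) else 0) + (if Q then (1:ℝ) else 0) ≤ 1 := by
      intro P Q _ _ hPQ
      by_cases hP : P <;> by_cases hQ : Q <;> simp [hP, hQ]
      exact absurd (hPQ hP hQ) not_false
    have nonneg : ∀ (P : Prop) [Decidable P], (0:ℝ) ≤ if P then (1:ℝ) else 0 := by
      intro P _; split <;> norm_num
    have h14 : (if b = a + 1 then (1:ℝ) else 0) + (if b = c + 1 then (1:ℝ) else 0) ≤ 1 :=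
      pair _ _ (fun z1 z4 => hac (by linear_combination z4 - z1))
    have h23 : (if a = b + 1 then (1:ℝ) else 0) + (if c = b + 1 then (1:ℝ) else 0) ≤ 1 :=
      pair _ _ (fun z2 z3 => hac (z2.trans z3.symm))
    have h5 := nonneg (c = a + 1)
    have h6 := nonneg (a = c + 1)
    linarith

/-- For `m ≥ 4` and pairwise distinct vertices `i,j,k`, the inequality
`y_{i,j} + y_{j,k} - y_{i,k}
  + ½·(z_{i,j} + z_{j,i} + z_{j,k} + z_{k,j} - z_{i,k} - z_{k,i}) ≤ 1`
is valid for `CCP(n,m)`. -/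
theorem triangle_half_z_valid (n m : ℕ) (hm : 4 ≤ m) (i j k : Fin n)
    (hij : i ≠ j) (hjk : j ≠ k) (hik : i ≠ k) :
    ∀ v ∈ CCP n m,
      Yc v i j + Yc v j k - Yc v i k
        + (1 / 2 : ℝ) * (Zc v i j + Zc v j i + Zc v j k + Zc v k j - Zc v i k - Zc v k i)
        ≤ 1 := by
  intro v hv
  set f : (CCIdx n m → ℝ) → ℝ := fun w =>
    w (yIdx i j hij) + w (yIdx j k hjk) - w (yIdx i k hik)
      + (1 / 2 : ℝ) * (w (zIdx i j hij) + w (zIdx j i hij.symm) + w (zIdx j k hjk)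
          + w (zIdx k j hjk.symm) - w (zIdx i k hik) - w (zIdx k i hik.symm)) with hfdef
  have hexpr : ∀ w : CCIdx n m → ℝ,
      Yc w i j + Yc w j k - Yc w i k
        + (1 / 2 : ℝ) * (Zc w i j + Zc w j i + Zc w j k + Zc w k j - Zc w i k - Zc w k i)
        = f w := by
    intro w
    simp only [Yc, Zc, hfdef, dif_pos hij, dif_pos hjk, dif_pos hik, dif_pos hij.symm,
      dif_pos hjk.symm, dif_pos hik.symm]
  have hlin : IsLinearMap ℝ f := by
    constructor
    · intro u w; simp only [hfdef, Pi.add_apply]; ring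
    · intro c u; simp only [hfdef, Pi.smul_apply, smul_eq_mul]; ring
  rw [hexpr]
  refine convexHull_min ?_ (convex_halfSpace_le hlin 1) hv
  rintro w ⟨κ, -, rfl⟩
  have hy : ∀ (p q : Fin n) (h : p ≠ q),
      incVec κ (yIdx p q h) = if κ p = κ q then (1:ℝ) else 0 := by
    intro p q h
    unfold yIdx
    by_cases h' : p < q
    · rw [dif_pos h']
      rfl
    · rw [dif_neg h']
      show (if κ q = κ p then (1:ℝ) else 0) = _
      exact if_congr eq_comm rfl rfl
  have hz : ∀ (p q : Fin n) (h : p ≠ q),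
      incVec κ (zIdx p q h) = if κ q = κ p + 1 then (1:ℝ) else 0 := fun _ _ _ => rfl
  show f (incVec κ) ≤ 1
  rw [hfdef]
  simp only [hy, hz]
  exact triangle_half_z_key m hm (κ i) (κ j) (κ k)

end
end

section
/- Let m = 4. For any three pairwise distinct vertices i, j, k ∈ V, the inequality z_{i,j} + z_{i,k} - 2·y_{j,k} - (z_{j,k} + z_{k,j} + z_{j,i} + z_{k,i}) ≤ 0 is valid for the cycle clustering polytope CCP(n,4). -/
open scoped BigOperators

noncomputable section

/-- For `m = 4` and pairwise distinct vertices `i,j,k`, the inequality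
`z_{i,j} + z_{i,k} - 2·y_{j,k} - (z_{j,k} + z_{k,j} + z_{j,i} + z_{k,i}) ≤ 0`
is valid for `CCP(n,4)`. -/
theorem triangle_four_clusters_valid (n : ℕ) (i j k : Fin n)
    (hij : i ≠ j) (hjk : j ≠ k) (hik : i ≠ k) :
    ∀ v ∈ CCP n 4,
      Zc v i j + Zc v i k - 2 * Yc v j k
        - (Zc v j k + Zc v k j + Zc v j i + Zc v k i) ≤ 0 := by
  intro v hv
  have hylem : ∀ (κ : Fin n → ZMod 4), incVec κ (yIdx j k hjk) = if κ j = κ k then 1 else 0 := by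
    intro κ
    unfold yIdx
    by_cases h1 : j < k
    · rw [dif_pos h1]; rfl
    · rw [dif_neg h1]
      show (if κ k = κ j then (1:ℝ) else 0) = _
      simp [eq_comm]
  simp only [Zc, Yc, dif_pos hij, dif_pos hik, dif_pos hjk, dif_pos hjk.symm,
    dif_pos hij.symm, dif_pos hik.symm]
  set t : Set (CCIdx n 4 → ℝ) := {w | w (zIdx i j hij) + w (zIdx i k hik)
      - 2 * w (yIdx j k hjk)
      - (w (zIdx j k hjk) + w (zIdx k j hjk.symm) + w (zIdx j i hij.symm)
        + w (zIdx k i hik.symm)) ≤ 0} with ht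
  have hconv : Convex ℝ t := by
    intro x hx y hy a b ha hb hab
    simp only [ht, Set.mem_setOf_eq, Pi.add_apply, Pi.smul_apply, smul_eq_mul] at *
    nlinarith [mul_nonpos_of_nonneg_of_nonpos ha hx, mul_nonpos_of_nonneg_of_nonpos hb hy]
  have hvert : {w | ∃ κ : Fin n → ZMod 4, Function.Surjective κ ∧ w = incVec κ} ⊆ t := by
    rintro w ⟨κ, -, rfl⟩
    have key : ∀ a b c : ZMod 4,
        ((if b = a + 1 then (1:ℤ) else 0) + (if c = a + 1 then 1 else 0)
          - 2 * (if b = c then 1 else 0)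
          - ((if c = b + 1 then 1 else 0) + (if b = c + 1 then 1 else 0)
            + (if a = b + 1 then 1 else 0) + (if a = c + 1 then 1 else 0))) ≤ 0 := by decide
    have hkey := key (κ i) (κ j) (κ k)
    simp only [ht, Set.mem_setOf_eq, hylem κ]
    have hz1 : incVec κ (zIdx i j hij) = if κ j = κ i + 1 then (1:ℝ) else 0 := rfl
    have hz2 : incVec κ (zIdx i k hik) = if κ k = κ i + 1 then (1:ℝ) else 0 := rfl
    have hz3 : incVec κ (zIdx j k hjk) = if κ k = κ j + 1 then (1:ℝ) else 0 := rfl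
    have hz4 : incVec κ (zIdx k j hjk.symm) = if κ j = κ k + 1 then (1:ℝ) else 0 := rfl
    have hz5 : incVec κ (zIdx j i hij.symm) = if κ i = κ j + 1 then (1:ℝ) else 0 := rfl
    have hz6 : incVec κ (zIdx k i hik.symm) = if κ i = κ k + 1 then (1:ℝ) else 0 := rfl
    rw [hz1, hz2, hz3, hz4, hz5, hz6]
    have : (((if κ j = κ i + 1 then (1:ℤ) else 0) + (if κ k = κ i + 1 then 1 else 0)
        - 2 * (if κ j = κ k then 1 else 0)
        - ((if κ k = κ j + 1 then 1 else 0) + (if κ j = κ k + 1 then 1 else 0)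
          + (if κ i = κ j + 1 then 1 else 0) + (if κ i = κ k + 1 then 1 else 0)) : ℤ) : ℝ) ≤ 0 := by
      exact_mod_cast hkey
    convert this using 2 <;> push_cast <;> ring
  exact convexHull_min hvert hconv hv

end
end

section
/- Let m ≥ 3 and let K = {(i_1,i_2), (i_2,i_3), ..., (i_{ℓ-1},i_ℓ), (i_ℓ,i_1)} be any directed cycle on pairwise distinct vertices i_1,...,i_ℓ ∈ V with 1 < ℓ = |K| < m. Then the subtour elimination inequality ∑_{(i,j) ∈ K} z_{i,j} ≤ |K| - 1 is valid for the cycle clustering polytope CCP(n,m); equivalently, for every surjective map κ : V → ZMod m, it is impossible that κ(i_{t+1}) = κ(i_t) + 1 for all t = 1,...,ℓ (indices cyclic). -/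
open scoped BigOperators

noncomputable section

/- A cyclic walk of `ℓ` steps, each adding `1` in `ZMod m`, returns to its start only if `ℓ ≡ 0`
mod `m`; for `0 < ℓ < m` this is impossible. Hence every feasible clustering misses at least one
arc of the cycle, so at a vertex of `CCP(n,m)` at most `ℓ - 1` of the `0/1` values `z_{i,j}` on the
cycle equal `1`. The inequality is linear, so it passes to the convex hull. -/

theorem not_forall_succ_mod_eq_add_one {m ℓ : ℕ} (hℓ : 0 < ℓ) (hℓm : ℓ < m) (a : ℕ → ZMod m) :
    ¬ ∀ t < ℓ, a ((t + 1) % ℓ) = a t + 1 := by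
  intro h
  have walk : ∀ t ≤ ℓ, a (t % ℓ) = a 0 + t := by
    intro t ht
    induction t with
    | zero => simp
    | succ k ih =>
      have ihk := ih (by omega)
      rw [Nat.mod_eq_of_lt (by omega)] at ihk
      rw [h k (by omega), ihk]
      push_cast
      ring
  have hzero : (ℓ : ZMod m) = 0 := by
    simpa using walk ℓ le_rfl
  have := Nat.le_of_dvd hℓ ((ZMod.natCast_eq_zero_iff ℓ m).mp hzero)
  omega

theorem Finset.sum_le_card_sub_one {ι R : Type*} [DecidableEq ι]
    [Ring R] [PartialOrder R] [IsOrderedRing R] {s : Finset ι} {f : ι → R} (hf : ∀ i ∈ s, f i ≤ 1) {i₀ : ι} (hi₀ : i₀ ∈ s) (h₀ : f i₀ ≤ 0) :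
    ∑ i ∈ s, f i ≤ (s.card : R) - 1 := by
  have hrest : ∑ i ∈ s.erase i₀, f i ≤ (s.erase i₀).card • (1 : R) :=
    Finset.sum_le_card_nsmul _ _ _ fun i hi => hf i (Finset.mem_of_mem_erase hi)
  rw [Finset.card_erase_of_mem hi₀, nsmul_one,
    Nat.cast_sub (Finset.card_pos.mpr ⟨i₀, hi₀⟩), Nat.cast_one] at hrest
  rw [← Finset.add_sum_erase s f hi₀]
  simpa using add_le_add h₀ hrest

theorem le_of_mem_convexHull {E : Type*} [AddCommGroup E] [Module ℝ E] {s : Set E}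
    (f : E →ₗ[ℝ] ℝ) {b : ℝ} (hs : ∀ x ∈ s, f x ≤ b) {x : E} (hx : x ∈ convexHull ℝ s) :
    f x ≤ b :=
  convexHull_min hs (convex_halfSpace_le f.isLinear b) hx

section Coordinates

variable {n m : ℕ}

def zCoord (i j : Fin n) : (CCIdx n m → ℝ) →ₗ[ℝ] ℝ :=
  if h : i ≠ j then LinearMap.proj (zIdx i j h) else 0

theorem zCoord_apply (i j : Fin n) (v : CCIdx n m → ℝ) : zCoord i j v = Zc v i j := by
  unfold zCoord Zc
  split_ifs <;> rfl

theorem Zc_incVec_le_one (κ : Fin n → ZMod m) (i j : Fin n) : Zc (incVec κ) i j ≤ 1 := by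
  unfold Zc
  split_ifs
  · simp only [incVec, zIdx, Sum.elim_inr]
    split_ifs <;> norm_num
  · norm_num

theorem Zc_incVec_eq_zero {κ : Fin n → ZMod m} {i j : Fin n} (h : κ j ≠ κ i + 1) :
    Zc (incVec κ) i j = 0 := by
  unfold Zc
  split_ifs
  · simp [incVec, zIdx, h]
  · rfl

end Coordinates

theorem subtour_inequality_general (n m ℓ : ℕ) (hℓ : 1 < ℓ) (hℓm : ℓ < m)
    (c : ℕ → Fin n) :
    (∀ v ∈ CCP n m,
      ∑ t ∈ Finset.range ℓ, Zc v (c t) (c ((t + 1) % ℓ)) ≤ (ℓ : ℝ) - 1) ∧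
    (∀ κ : Fin n → ZMod m, Function.Surjective κ →
      ¬ (∀ t < ℓ, κ (c ((t + 1) % ℓ)) = κ (c t) + 1)) := by
  have no_cycle : ∀ κ : Fin n → ZMod m, ¬ ∀ t < ℓ, κ (c ((t + 1) % ℓ)) = κ (c t) + 1 :=
    fun κ => not_forall_succ_mod_eq_add_one (by omega) hℓm (κ ∘ c)
  refine ⟨fun v hv => ?_, fun κ _ => no_cycle κ⟩
  let f := ∑ t ∈ Finset.range ℓ, zCoord (m := m) (c t) (c ((t + 1) % ℓ))
  have hf : ∀ w, f w = ∑ t ∈ Finset.range ℓ, Zc w (c t) (c ((t + 1) % ℓ)) := by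
    simp [f, zCoord_apply]
  rw [← hf]
  refine le_of_mem_convexHull f ?_ hv
  rintro _ ⟨κ, -, rfl⟩
  obtain ⟨t₀, ht₀, hmiss⟩ : ∃ t < ℓ, κ (c ((t + 1) % ℓ)) ≠ κ (c t) + 1 := by
    simpa using no_cycle κ
  simpa [hf] using Finset.sum_le_card_sub_one
    (f := fun t => Zc (incVec κ) (c t) (c ((t + 1) % ℓ))) (fun t _ => Zc_incVec_le_one κ _ _)
    (Finset.mem_range.mpr ht₀) (Zc_incVec_eq_zero hmiss).le

/-- For `m ≥ 3` and a directed cycle `(c 0, c 1), …, (c (ℓ-1), c 0)` on pairwise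
distinct vertices with `1 < ℓ < m`, the subtour elimination inequality
`∑_{(i,j)∈K} z_{i,j} ≤ |K| - 1` is valid for `CCP(n,m)`; equivalently, for
every surjective `κ : V → ZMod m` it is impossible that
`κ (c (t+1)) = κ (c t) + 1` for all `t` (indices cyclic). -/
theorem subtour_inequality (n m ℓ : ℕ) (hm : 3 ≤ m) (hℓ : 1 < ℓ) (hℓm : ℓ < m)
    (c : ℕ → Fin n) (hinj : ∀ t₁ < ℓ, ∀ t₂ < ℓ, c t₁ = c t₂ → t₁ = t₂) :
    (∀ v ∈ CCP n m,
      ∑ t ∈ Finset.range ℓ, Zc v (c t) (c ((t + 1) % ℓ)) ≤ (ℓ : ℝ) - 1) ∧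
    (∀ κ : Fin n → ZMod m, Function.Surjective κ →
      ¬ (∀ t < ℓ, κ (c ((t + 1) % ℓ)) = κ (c t) + 1)) :=
  subtour_inequality_general n m ℓ hℓ hℓm c

end
end

section
/- Let m ≥ 3, let P = {(i_1,i_2), (i_2,i_3), ..., (i_{m-1},i_m)} be a directed path on pairwise distinct vertices i_1,...,i_m ∈ V of length m-1 with i_m ≠ i_1, and let U ⊊ P be a strict subset of P. Then the path inequality ∑_{(i,j) ∈ P} z_{i,j} + ∑_{(i,j) ∈ U} y_{i,j} + y_{i_1,i_m} ≤ m - 1 is valid for the cycle clustering polytope CCP(n,m); equivalently, for every surjective map κ : V → ZMod m, if for every arc (i,j) ∈ P either κ(j) = κ(i) + 1, or (i,j) ∈ U and κ(i) = κ(j), then κ(i_1) ≠ κ(i_m). -/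
open scoped BigOperators

noncomputable section

/-!
Along the path each arc contributes at most one to `z + y` (for `m ≥ 2` an arc cannot both
advance the cluster index and stay in the same cluster), so the left-hand side can exceed
`m - 1` only if every arc is tight and `y_{i₁,i_m} = 1`. Tight arcs either advance by one or lie
in `U` and stay, so `κ i_m - κ i₁` is the number of advancing arcs, an integer in `[0, m - 1]`;
it vanishes modulo `m` only if no arc advances, which forces `U = P`. Validity passes from the
vertices to `CCP(n,m)` because the left-hand side is linear.
-/

open Finset

section ZModWalk

variable {m : ℕ}

lemma apply_eq_add_card_filter_ne (a : ℕ → ZMod m) (ℓ : ℕ)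
    (hstep : ∀ t < ℓ, a (t + 1) = a t + 1 ∨ a (t + 1) = a t) :
    a ℓ = a 0 + #{t ∈ range ℓ | a (t + 1) ≠ a t} := by
  induction ℓ with
  | zero => simp
  | succ ℓ ih =>
    rw [range_add_one, filter_insert]
    have ih := ih fun t ht => hstep t (by omega)
    by_cases heq : a (ℓ + 1) = a ℓ
    · rw [if_neg (not_not.mpr heq), heq, ih]
    · rw [if_pos heq, card_insert_of_notMem (by simp), (hstep ℓ (by omega)).resolve_right heq, ih]
      push_cast
      ring

lemma forall_succ_eq_of_apply_eq_of_lt (a : ℕ → ZMod m) {ℓ : ℕ} (hℓ : ℓ < m)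
    (hstep : ∀ t < ℓ, a (t + 1) = a t + 1 ∨ a (t + 1) = a t) (hloop : a ℓ = a 0) :
    ∀ t < ℓ, a (t + 1) = a t := by
  have hcount := apply_eq_add_card_filter_ne a ℓ hstep
  rw [hloop, left_eq_add, ZMod.natCast_eq_zero_iff] at hcount
  have hlt : #{t ∈ range ℓ | a (t + 1) ≠ a t} < m :=
    (card_filter_le _ _).trans_lt (by simpa using hℓ)
  have hempty := card_eq_zero.mp (Nat.eq_zero_of_dvd_of_lt hcount hlt)
  intro t ht
  by_contra hne
  have : t ∈ ({t ∈ range ℓ | a (t + 1) ≠ a t} : Finset ℕ) := by simp [ht, hne]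
  simp [hempty] at this

lemma two_le_of_ssubset_range_sub_one {U : Finset ℕ} (hU : U ⊂ range (m - 1)) : 2 ≤ m := by
  obtain ⟨t, ht, -⟩ := exists_of_ssubset hU
  rw [mem_range] at ht
  omega

lemma apply_zero_ne_apply_sub_one (a : ℕ → ZMod m) {U : Finset ℕ} (hU : U ⊂ range (m - 1))
    (hstep : ∀ t < m - 1, a (t + 1) = a t + 1 ∨ (t ∈ U ∧ a t = a (t + 1))) :
    a 0 ≠ a (m - 1) := by
  have hm := two_le_of_ssubset_range_sub_one hU
  have : Nontrivial (ZMod m) := ZMod.nontrivial_iff.mpr (by omega)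
  intro hloop
  have hconst := forall_succ_eq_of_apply_eq_of_lt a (by omega : m - 1 < m)
    (fun t ht => (hstep t ht).imp_right fun h => h.2.symm) hloop.symm
  refine hU.2 fun t ht => ?_
  have ht : t < m - 1 := mem_range.mp ht
  rcases hstep t ht with hsucc | ⟨htU, -⟩
  · simp [hconst t ht] at hsucc
  · exact htU

end ZModWalk

lemma Finset.sum_le_card_sub_one_of_eq_zero {ι : Type*} [DecidableEq ι] {s : Finset ι}
    {g : ι → ℝ} (hle : ∀ i ∈ s, g i ≤ 1) {i₀ : ι} (hi₀ : i₀ ∈ s) (hzero : g i₀ = 0) :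
    ∑ i ∈ s, g i ≤ #s - 1 := by
  rw [← add_sum_erase s g hi₀, hzero, zero_add]
  calc ∑ i ∈ s.erase i₀, g i ≤ #(s.erase i₀) • (1 : ℝ) :=
        sum_le_card_nsmul _ _ _ fun i hi => hle i (mem_of_mem_erase hi)
    _ = #s - 1 := by
        rw [card_erase_of_mem hi₀, nsmul_one, Nat.cast_sub (card_pos.mpr ⟨i₀, hi₀⟩)]
        simp

section Incidence

variable {n m : ℕ}

lemma Zc_incVec (κ : Fin n → ZMod m) (i j : Fin n) :
    Zc (incVec κ) i j = if i ≠ j ∧ κ j = κ i + 1 then 1 else 0 := by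
  by_cases h : i = j <;> simp [Zc, incVec, zIdx, h]

lemma Yc_incVec (κ : Fin n → ZMod m) (i j : Fin n) :
    Yc (incVec κ) i j = if i ≠ j ∧ κ i = κ j then 1 else 0 := by
  by_cases h : i = j
  · simp [Yc, h]
  · rw [Yc, dif_pos h, yIdx]
    split_ifs <;> simp_all [incVec, eq_comm]

lemma Zc_add_ite_Yc_incVec_le_one [Nontrivial (ZMod m)] (κ : Fin n → ZMod m) (i j : Fin n)
    (p : Prop) [Decidable p] :
    Zc (incVec κ) i j + (if p then Yc (incVec κ) i j else 0) ≤ 1 := by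
  have hexcl : ¬(κ j = κ i + 1 ∧ κ i = κ j) := fun ⟨hsucc, heq⟩ => by simp [heq] at hsucc
  rw [Zc_incVec, Yc_incVec]
  split_ifs <;> norm_num
  tauto

lemma Zc_add_ite_Yc_incVec_eq_zero (κ : Fin n → ZMod m) (i j : Fin n) (p : Prop) [Decidable p]
    (h : ¬(κ j = κ i + 1 ∨ (p ∧ κ i = κ j))) :
    Zc (incVec κ) i j + (if p then Yc (incVec κ) i j else 0) = 0 := by
  rw [Zc_incVec, Yc_incVec]
  split_ifs <;> norm_num <;> tauto

end Incidence

section PathForm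

variable {n m : ℕ}

def ZcLinear (i j : Fin n) : (CCIdx n m → ℝ) →ₗ[ℝ] ℝ where
  toFun v := Zc v i j
  map_add' v w := by unfold Zc; split_ifs <;> simp
  map_smul' a v := by unfold Zc; split_ifs <;> simp

def YcLinear (i j : Fin n) : (CCIdx n m → ℝ) →ₗ[ℝ] ℝ where
  toFun v := Yc v i j
  map_add' v w := by unfold Yc; split_ifs <;> simp
  map_smul' a v := by unfold Yc; split_ifs <;> simp

def pathForm (c : ℕ → Fin n) (U : Finset ℕ) : (CCIdx n m → ℝ) →ₗ[ℝ] ℝ :=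
  ∑ t ∈ range (m - 1), ZcLinear (c t) (c (t + 1)) + ∑ t ∈ U, YcLinear (c t) (c (t + 1))
    + YcLinear (c 0) (c (m - 1))

lemma pathForm_apply (c : ℕ → Fin n) (U : Finset ℕ) (v : CCIdx n m → ℝ) :
    pathForm c U v = ∑ t ∈ range (m - 1), Zc v (c t) (c (t + 1))
      + ∑ t ∈ U, Yc v (c t) (c (t + 1)) + Yc v (c 0) (c (m - 1)) := by
  simp [pathForm, ZcLinear, YcLinear, LinearMap.sum_apply]

lemma pathForm_incVec_le (c : ℕ → Fin n) {U : Finset ℕ} (hU : U ⊂ range (m - 1))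
    (κ : Fin n → ZMod m) : pathForm c U (incVec κ) ≤ (m : ℝ) - 1 := by
  have hm := two_le_of_ssubset_range_sub_one hU
  have : Nontrivial (ZMod m) := ZMod.nontrivial_iff.mpr (by omega)
  set g : ℕ → ℝ := fun t => Zc (incVec κ) (c t) (c (t + 1))
    + if t ∈ U then Yc (incVec κ) (c t) (c (t + 1)) else 0
  have hsplit : pathForm c U (incVec κ)
      = ∑ t ∈ range (m - 1), g t + Yc (incVec κ) (c 0) (c (m - 1)) := by
    rw [pathForm_apply, ← inter_eq_right.mpr hU.1, ← sum_ite_mem, ← sum_add_distrib]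
  have hg : ∀ t ∈ range (m - 1), g t ≤ 1 := fun t _ => Zc_add_ite_Yc_incVec_le_one ..
  have hcard : (#(range (m - 1)) : ℝ) = m - 1 := by
    rw [card_range, Nat.cast_sub (by omega), Nat.cast_one]
  rw [hsplit]
  by_cases hgood : ∀ t < m - 1,
      κ (c (t + 1)) = κ (c t) + 1 ∨ (t ∈ U ∧ κ (c t) = κ (c (t + 1)))
  · have hends := apply_zero_ne_apply_sub_one (fun t => κ (c t)) hU hgood
    have hy : Yc (incVec κ) (c 0) (c (m - 1)) = 0 := by simp [Yc_incVec, hends]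
    have := sum_le_card_nsmul _ _ _ hg
    rw [nsmul_one, hcard] at this
    linarith
  · push Not at hgood
    obtain ⟨t₀, ht₀, hbad⟩ := hgood
    have hzero : g t₀ = 0 := Zc_add_ite_Yc_incVec_eq_zero _ _ _ _ (by tauto)
    have := sum_le_card_sub_one_of_eq_zero hg (mem_range.mpr ht₀) hzero
    have hy : Yc (incVec κ) (c 0) (c (m - 1)) ≤ 1 := by rw [Yc_incVec]; split_ifs <;> norm_num
    linarith

end PathForm

theorem path_inequality_general (n m : ℕ) (c : ℕ → Fin n)
    (U : Finset ℕ) (hU : U ⊂ Finset.range (m - 1)) :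
    (∀ v ∈ CCP n m,
      ∑ t ∈ Finset.range (m - 1), Zc v (c t) (c (t + 1))
        + ∑ t ∈ U, Yc v (c t) (c (t + 1)) + Yc v (c 0) (c (m - 1))
        ≤ (m : ℝ) - 1) ∧
    (∀ κ : Fin n → ZMod m, Function.Surjective κ →
      (∀ t < m - 1, κ (c (t + 1)) = κ (c t) + 1 ∨ (t ∈ U ∧ κ (c t) = κ (c (t + 1)))) →
      κ (c 0) ≠ κ (c (m - 1))) := by
  refine ⟨fun v hv => ?_, fun κ _ hstep => apply_zero_ne_apply_sub_one (κ ∘ c) hU hstep⟩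
  have hvertices : {w | ∃ κ : Fin n → ZMod m, Function.Surjective κ ∧ w = incVec κ}
      ⊆ {w | pathForm c U w ≤ (m : ℝ) - 1} := by
    rintro _ ⟨κ, -, rfl⟩
    exact pathForm_incVec_le c hU κ
  have := convexHull_min hvertices (convex_halfSpace_le (pathForm c U).isLinear _) hv
  rwa [Set.mem_ofPred_eq, pathForm_apply] at this

/-- For `m ≥ 3`, a directed path `(c 0, c 1), …, (c (m-2), c (m-1))` of length
`m - 1` on pairwise distinct vertices, and a strict subset `U` of its arcs
(encoded by its index set `U ⊂ {0, …, m-2}`), the path inequality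
`∑_{(i,j)∈P} z_{i,j} + ∑_{(i,j)∈U} y_{i,j} + y_{i₁,i_m} ≤ m - 1` is valid for
`CCP(n,m)`; equivalently, for every surjective `κ : V → ZMod m`, if for every
arc `(i,j)` of the path either `κ j = κ i + 1`, or the arc lies in `U` and
`κ i = κ j`, then `κ (c 0) ≠ κ (c (m-1))`. -/
theorem path_inequality (n m : ℕ) (hm : 3 ≤ m) (c : ℕ → Fin n)
    (hinj : ∀ t₁ < m, ∀ t₂ < m, c t₁ = c t₂ → t₁ = t₂)
    (U : Finset ℕ) (hU : U ⊂ Finset.range (m - 1)) :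
    (∀ v ∈ CCP n m,
      ∑ t ∈ Finset.range (m - 1), Zc v (c t) (c (t + 1))
        + ∑ t ∈ U, Yc v (c t) (c (t + 1)) + Yc v (c 0) (c (m - 1))
        ≤ (m : ℝ) - 1) ∧
    (∀ κ : Fin n → ZMod m, Function.Surjective κ →
      (∀ t < m - 1, κ (c (t + 1)) = κ (c t) + 1 ∨ (t ∈ U ∧ κ (c t) = κ (c (t + 1)))) →
      κ (c 0) ≠ κ (c (m - 1))) :=
  path_inequality_general n m c U hU

end
end
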